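/- arXiv:2106.07246 — 11 statements merged into one kernel-verified Lean document; each statement's English description precedes it below -/
import Mathlib

section
/- For every numerical semigroup S ≠ ℤ≥0 with embedding dimension e(S) = 3, Wilf's inequality holds: (f(S)+1-g(S))/(f(S)+1) ≥ 1/3. -/
/-- A numerical semigroup: additively closed subset of ℕ containing 0 with finite complement. -/
def IsNumSgp (S : Set ℕ) : Prop :=
  0 ∈ S ∧ (∀ a ∈ S, ∀ b ∈ S, a + b ∈ S) ∧ Sᶜ.Finite

/-- The genus: number of gaps. -/
noncomputable def genus (S : Set ℕ) : ℕ := Sᶜ.ncard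

/-- The Frobenius number: largest gap. -/
noncomputable def frob (S : Set ℕ) : ℕ := sSup Sᶜ

/-- Atoms: minimal generators S* \ (S* + S*). -/
def atoms (S : Set ℕ) : Set ℕ :=
  (S \ {0}) \ {n | ∃ a ∈ S \ {0}, ∃ b ∈ S \ {0}, n = a + b}

/-- Embedding dimension: number of atoms. -/
noncomputable def edim (S : Set ℕ) : ℕ := (atoms S).ncard

/-- Multiplicity: smallest positive element. -/
noncomputable def mult (S : Set ℕ) : ℕ := sInf (S \ {0})

/-- Density of S in [0, f(S)]. -/
noncomputable def density (S : Set ℕ) : ℝ :=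
  ((frob S : ℝ) + 1 - genus S) / ((frob S : ℝ) + 1)

section WilfAux

variable {S : Set ℕ}

private lemma wilf_mulmem (h0 : 0 ∈ S) (hadd : ∀ a ∈ S, ∀ b ∈ S, a + b ∈ S) :
    ∀ (k x : ℕ), x ∈ S → k * x ∈ S := by
  intro k
  induction k with
  | zero => intro x _; simpa using h0
  | succ n ih =>
    intro x hx
    have := hadd _ (ih x hx) _ hx
    simpa [Nat.succ_mul] using this

private lemma wilf_gen (hadd : ∀ a ∈ S, ∀ b ∈ S, a + b ∈ S) {a b c : ℕ}
    (hat : atoms S = {a, b, c}) :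
    ∀ s ∈ S, ∃ u x y : ℕ, s = u * a + x * b + y * c := by
  intro s
  induction s using Nat.strong_induction_on with
  | _ s ih =>
    intro hs
    rcases eq_or_ne s 0 with rfl | hs0
    · exact ⟨0, 0, 0, by simp⟩
    by_cases hatom : s ∈ atoms S
    · rw [hat] at hatom
      rcases hatom with rfl | rfl | rfl
      · exact ⟨1, 0, 0, by ring⟩
      · exact ⟨0, 1, 0, by ring⟩
      · exact ⟨0, 0, 1, by ring⟩
    · have hmem : s ∈ {n | ∃ p ∈ S \ {0}, ∃ q ∈ S \ {0}, n = p + q} := by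
        by_contra hX
        exact hatom ⟨⟨hs, by simpa using hs0⟩, hX⟩
      obtain ⟨p, hp, q, hq, rfl⟩ := hmem
      have hp0 : p ≠ 0 := by simpa using hp.2
      have hq0 : q ≠ 0 := by simpa using hq.2
      obtain ⟨u1, x1, y1, e1⟩ := ih p (by omega) hp.1
      obtain ⟨u2, x2, y2, e2⟩ := ih q (by omega) hq.1
      exact ⟨u1 + u2, x1 + x2, y1 + y2, by rw [e1, e2]; ring⟩

/-- Key lemma: a numerical semigroup with three atoms has at most two
pseudo-Frobenius numbers. -/
private lemma wilf_pf_three (h0 : 0 ∈ S) (hadd : ∀ a ∈ S, ∀ b ∈ S, a + b ∈ S)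
    {a b c : ℕ} (hat : atoms S = {a, b, c}) {f1 f2 f3 : ℕ}
    (hpf1 : f1 ∉ S ∧ ∀ s ∈ S, s ≠ 0 → f1 + s ∈ S)
    (hpf2 : f2 ∉ S ∧ ∀ s ∈ S, s ≠ 0 → f2 + s ∈ S)
    (hpf3 : f3 ∉ S ∧ ∀ s ∈ S, s ≠ 0 → f3 + s ∈ S) :
    f1 = f2 ∨ f1 = f3 ∨ f2 = f3 := by
  by_contra hcon
  push_neg at hcon
  obtain ⟨n12, n13, n23⟩ := hcon
  -- atoms are in S and nonzero
  have hmema : ∀ x ∈ ({a, b, c} : Set ℕ), x ∈ S ∧ x ≠ 0 := by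
    intro x hx
    rw [← hat] at hx
    exact ⟨hx.1.1, by simpa using hx.1.2⟩
  obtain ⟨ha, ha0⟩ := hmema a (by simp)
  obtain ⟨hb, hb0⟩ := hmema b (by simp)
  obtain ⟨hc, hc0⟩ := hmema c (by simp)
  have hmul := wilf_mulmem h0 hadd
  have hS3 : ∀ u x y : ℕ, u * a + x * b + y * c ∈ S := fun u x y =>
    hadd _ (hadd _ (hmul u a ha) _ (hmul x b hb)) _ (hmul y c hc)
  -- "AIn w" means w ∈ a + S
  set AIn : ℕ → Prop := fun w => ∃ s ∈ S, w = a + s with hAInDef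
  set Ap : ℕ → Prop := fun w => w ∈ S ∧ ¬ AIn w with hApDef
  have hAin : ∀ (u x y w : ℕ), 1 ≤ u → w = u * a + x * b + y * c → AIn w := by
    intro u x y w hu hw
    refine ⟨(u - 1) * a + x * b + y * c, hS3 _ _ _, ?_⟩
    have h1 : u * a = a + (u - 1) * a := by
      have h2 : u = 1 + (u - 1) := by omega
      calc u * a = (1 + (u - 1)) * a := by rw [← h2]
        _ = a + (u - 1) * a := by ring
    rw [hw, h1]; ring
  have hAin' : ∀ w, AIn w → ∃ P q r : ℕ, 1 ≤ P ∧ w = P * a + q * b + r * c := by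
    intro w hw
    obtain ⟨s, hs, rfl⟩ := hw
    obtain ⟨u, x, y, he⟩ := wilf_gen hadd hat s hs
    exact ⟨u + 1, x, y, by omega, by rw [he]; ring⟩
  -- α and γ
  have hαex : ∃ t, 0 < t ∧ AIn (t * b) := by
    refine ⟨a, Nat.pos_of_ne_zero ha0, (b - 1) * a, hmul _ _ ha, ?_⟩
    have h2 : b = 1 + (b - 1) := by omega
    calc a * b = (1 + (b - 1)) * a := by rw [← h2]; ring
      _ = a + (b - 1) * a := by ring
  have hγex : ∃ t, 0 < t ∧ AIn (t * c) := by
    refine ⟨a, Nat.pos_of_ne_zero ha0, (c - 1) * a, hmul _ _ ha, ?_⟩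
    have h2 : c = 1 + (c - 1) := by omega
    calc a * c = (1 + (c - 1)) * a := by rw [← h2]; ring
      _ = a + (c - 1) * a := by ring
  set α := sInf {t | 0 < t ∧ AIn (t * b)} with hαdef
  set γ := sInf {t | 0 < t ∧ AIn (t * c)} with hγdef
  have hαspec : 0 < α ∧ AIn (α * b) := Nat.sInf_mem hαex
  have hγspec : 0 < γ ∧ AIn (γ * c) := Nat.sInf_mem hγex
  have hαmin : ∀ t, 0 < t → AIn (t * b) → α ≤ t := fun t h1 h2 => Nat.sInf_le ⟨h1, h2⟩
  have hγmin : ∀ t, 0 < t → AIn (t * c) → γ ≤ t := fun t h1 h2 => Nat.sInf_le ⟨h1, h2⟩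
  -- every representation of an Apéry element is in the box
  have hboxb : ∀ w x y, Ap w → w = x * b + y * c → x < α := by
    intro w x y hw hrep
    by_contra hge
    push_neg at hge
    obtain ⟨s, hs, hsb⟩ := hαspec.2
    apply hw.2
    refine ⟨s + (x - α) * b + y * c, hadd _ (hadd _ hs _ (hmul _ _ hb)) _ (hmul _ _ hc), ?_⟩
    have h1 : x * b = α * b + (x - α) * b := by
      rw [← Nat.add_mul]; congr 1; omega
    rw [hrep, h1, hsb]; ring
  have hboxc : ∀ w x y, Ap w → w = x * b + y * c → y < γ := by
    intro w x y hw hrep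
    by_contra hge
    push_neg at hge
    obtain ⟨s, hs, hsc⟩ := hγspec.2
    apply hw.2
    refine ⟨s + x * b + (y - γ) * c, hadd _ (hadd _ hs _ (hmul _ _ hb)) _ (hmul _ _ hc), ?_⟩
    have h1 : y * c = γ * c + (y - γ) * c := by
      rw [← Nat.add_mul]; congr 1; omega
    rw [hrep, h1, hsc]; ring
  -- the core argument: no maximal Apéry element has a minimal representation
  -- interior to the box
  have core : ∀ w x y : ℕ, Ap w → (∀ s ∈ S, s ≠ 0 → ¬ Ap (w + s)) →
      w = x * b + y * c → (∀ x' y', w = x' * b + y' * c → x ≤ x') →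
      x + 2 ≤ α → y + 2 ≤ γ → False := by
    intro w x y hw hmax hrep hminx hxα hyγ
    -- analyse w + b
    have hwbS : w + b ∈ S := hadd _ hw.1 _ hb
    have hwbA : AIn (w + b) := by
      by_contra h
      exact hmax b hb hb0 ⟨hwbS, h⟩
    obtain ⟨P, q, r, hP1, hEb⟩ := hAin' _ hwbA
    have hq0 : q = 0 := by
      by_contra hq
      obtain ⟨q0, rfl⟩ : ∃ q0, q = q0 + 1 := ⟨q - 1, by omega⟩
      apply hw.2
      apply hAin P q0 r w hP1
      have e2 : w + b = (P * a + q0 * b + r * c) + b := by rw [hEb]; ring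
      exact Nat.add_right_cancel e2
    rw [hq0] at hEb
    have hEb' : w + b = P * a + r * c := by rw [hEb]; ring
    have hry : r ≤ y := by
      by_contra hlt
      push_neg at hlt
      obtain ⟨d, hd⟩ : ∃ d, r = y + (d + 1) := ⟨r - y - 1, by omega⟩
      have hxb : (x + 1) * b = P * a + (d + 1) * c := by
        have e3 : x * b + y * c + b = P * a + r * c := by rw [← hrep]; exact hEb'
        have e4 : r * c = y * c + (d + 1) * c := by rw [hd]; ring
        have e5 : (x + 1) * b = x * b + b := by ring
        linarith
      have : AIn ((x + 1) * b) :=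
        hAin P 0 (d + 1) _ hP1 (by rw [hxb]; ring)
      have := hαmin (x + 1) (by omega) this
      omega
    obtain ⟨V, hVy⟩ : ∃ V, y = r + V := ⟨y - r, by omega⟩
    have hR1 : (x + 1) * b + V * c = P * a := by
      have e3 : x * b + y * c + b = P * a + r * c := by rw [← hrep]; exact hEb'
      have e4 : y * c = r * c + V * c := by rw [hVy]; ring
      have e5 : (x + 1) * b = x * b + b := by ring
      linarith
    have hV1 : 1 ≤ V := by
      by_contra hV
      have hV0 : V = 0 := by omega
      have e : (x + 1) * b = P * a := by
        have e1 : V * c = 0 := by rw [hV0]; ring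
        linarith
      have : AIn ((x + 1) * b) := by
        apply hAin P 0 0 _ hP1
        rw [e]; ring
      have := hαmin (x + 1) (by omega) this
      omega
    -- analyse w + c
    have hwcS : w + c ∈ S := hadd _ hw.1 _ hc
    have hwcA : AIn (w + c) := by
      by_contra h
      exact hmax c hc hc0 ⟨hwcS, h⟩
    obtain ⟨P', q', r', hP'1, hEc⟩ := hAin' _ hwcA
    have hr'0 : r' = 0 := by
      by_contra hr'
      obtain ⟨r0, rfl⟩ : ∃ r0, r' = r0 + 1 := ⟨r' - 1, by omega⟩
      apply hw.2
      apply hAin P' q' r0 w hP'1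
      have e2 : w + c = (P' * a + q' * b + r0 * c) + c := by rw [hEc]; ring
      exact Nat.add_right_cancel e2
    rw [hr'0] at hEc
    have hEc' : w + c = P' * a + q' * b := by rw [hEc]; ring
    have hq'x : q' ≤ x := by
      by_contra hlt
      push_neg at hlt
      obtain ⟨k, hk⟩ : ∃ k, q' = x + (k + 1) := ⟨q' - x - 1, by omega⟩
      have hyc : (y + 1) * c = P' * a + (k + 1) * b := by
        have e3 : x * b + y * c + c = P' * a + q' * b := by rw [← hrep]; exact hEc'
        have e4 : q' * b = x * b + (k + 1) * b := by rw [hk]; ring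
        have e5 : (y + 1) * c = y * c + c := by ring
        linarith
      have : AIn ((y + 1) * c) :=
        hAin P' (k + 1) 0 _ hP'1 (by rw [hyc]; ring)
      have := hγmin (y + 1) (by omega) this
      omega
    obtain ⟨U', hU'x⟩ : ∃ U', x = q' + U' := ⟨x - q', by omega⟩
    have hU'1 : 1 ≤ U' := by
      by_contra hU
      have hU0 : U' = 0 := by omega
      have hyc : (y + 1) * c = P' * a := by
        have e3 : x * b + y * c + c = P' * a + q' * b := by rw [← hrep]; exact hEc'
        have e4 : q' * b = x * b := by
          have : q' = x := by omega
          rw [this]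
        have e5 : (y + 1) * c = y * c + c := by ring
        linarith
      have : AIn ((y + 1) * c) := by
        apply hAin P' 0 0 _ hP'1
        rw [hyc]; ring
      have := hγmin (y + 1) (by omega) this
      omega
    -- combine: P*a + (r+1)*c = P'*a + (q'+1)*b
    have hC : P * a + (r + 1) * c = P' * a + (q' + 1) * b := by
      have e1 : (r + 1) * c = r * c + c := by ring
      have e2 : (q' + 1) * b = q' * b + b := by ring
      have e3 : w + b + c = P * a + r * c + c := by rw [hEb']
      have e4 : w + c + b = P' * a + q' * b + b := by rw [hEc']
      linarith
    rcases lt_trichotomy P P' with hPP | hPP | hPP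
    · -- (r+1) * c ∈ a + S, but r + 1 ≤ y < γ
      obtain ⟨d, hd⟩ : ∃ d, P' = P + (d + 1) := ⟨P' - P - 1, by omega⟩
      have e1 : P' * a = P * a + (d + 1) * a := by rw [hd]; ring
      have hrc : (r + 1) * c = (d + 1) * a + (q' + 1) * b := by linarith
      have : AIn ((r + 1) * c) :=
        hAin (d + 1) (q' + 1) 0 _ (by omega) (by rw [hrc]; ring)
      have := hγmin (r + 1) (by omega) this
      omega
    · -- K * b = L * c : contradicts minimality of x
      have hKL : (q' + 1) * b = (r + 1) * c := by
        rw [hPP] at hC; linarith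
      obtain ⟨U0, hU0⟩ : ∃ U0, x = q' + U0 + 1 := ⟨U' - 1, by omega⟩
      have hnew : w = U0 * b + (y + r + 1) * c := by
        have e1 : x * b = U0 * b + (q' + 1) * b := by rw [hU0]; ring
        have e2 : (y + r + 1) * c = y * c + (r + 1) * c := by ring
        rw [hrep, e1, hKL, e2]
        ring
      have := hminx _ _ hnew
      omega
    · -- (q'+1) * b ∈ a + S, but q' + 1 ≤ x < α
      obtain ⟨d, hd⟩ : ∃ d, P = P' + (d + 1) := ⟨P - P' - 1, by omega⟩
      have e1 : P * a = P' * a + (d + 1) * a := by rw [hd]; ring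
      have hqb : (q' + 1) * b = (d + 1) * a + (r + 1) * c := by linarith
      have : AIn ((q' + 1) * b) :=
        hAin (d + 1) 0 (r + 1) _ (by omega) (by rw [hqb]; ring)
      have := hαmin (q' + 1) (by omega) this
      omega
  -- minimal representations of Apéry elements
  have hrepmin : ∀ w, Ap w → ∃ x y : ℕ, w = x * b + y * c ∧
      ∀ x' y', w = x' * b + y' * c → x ≤ x' := by
    intro w hw
    obtain ⟨u, x, y, he⟩ := wilf_gen hadd hat w hw.1
    have hu : u = 0 := by
      by_contra hu
      exact hw.2 (hAin u x y w (by omega) he)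
    have hex : ∃ t, ∃ y', w = t * b + y' * c := ⟨x, y, by rw [he, hu]; ring⟩
    have hmem := Nat.sInf_mem hex
    obtain ⟨y0, hy0⟩ := hmem
    exact ⟨_, y0, hy0, fun x' y' h => Nat.sInf_le ⟨y', h⟩⟩
  -- incomparability of representations of distinct maximal elements
  have hinc : ∀ w x y w' x' y', (∀ s ∈ S, s ≠ 0 → ¬ Ap (w + s)) → Ap w' → w ≠ w' →
      w = x * b + y * c → w' = x' * b + y' * c → ¬(x ≤ x' ∧ y ≤ y') := by
    rintro w x y w' x' y' hmax hAp' hne hrep hrep' ⟨hxx, hyy⟩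
    obtain ⟨dx, rfl⟩ : ∃ dx, x' = x + dx := ⟨x' - x, by omega⟩
    obtain ⟨dy, rfl⟩ : ∃ dy, y' = y + dy := ⟨y' - y, by omega⟩
    have hsS : dx * b + dy * c ∈ S := hadd _ (hmul _ _ hb) _ (hmul _ _ hc)
    have hsum : w' = w + (dx * b + dy * c) := by rw [hrep, hrep']; ring
    have hs0 : dx * b + dy * c ≠ 0 := by
      intro h
      rw [h, Nat.add_zero] at hsum
      exact hne hsum.symm
    exact hmax _ hsS hs0 (hsum ▸ hAp')
  -- the three maximal Apéry elements
  have hw : ∀ f0 : ℕ, (f0 ∉ S ∧ ∀ s ∈ S, s ≠ 0 → f0 + s ∈ S) →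
      Ap (f0 + a) ∧ (∀ s ∈ S, s ≠ 0 → ¬ Ap (f0 + a + s)) := by
    intro f0 hf0
    constructor
    · constructor
      · exact hf0.2 a ha ha0
      · rintro ⟨s, hs, hsum⟩
        have : f0 = s := by omega
        exact hf0.1 (this ▸ hs)
    · intro s hs hs0 hap
      apply hap.2
      exact ⟨f0 + s, hf0.2 s hs hs0, by ring⟩
  obtain ⟨hap1, hmax1⟩ := hw f1 hpf1
  obtain ⟨hap2, hmax2⟩ := hw f2 hpf2
  obtain ⟨hap3, hmax3⟩ := hw f3 hpf3
  obtain ⟨x1, y1, hrep1, hmin1⟩ := hrepmin _ hap1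
  obtain ⟨x2, y2, hrep2, hmin2⟩ := hrepmin _ hap2
  obtain ⟨x3, y3, hrep3, hmin3⟩ := hrepmin _ hap3
  have hw12 : f1 + a ≠ f2 + a := by omega
  have hw13 : f1 + a ≠ f3 + a := by omega
  have hw23 : f2 + a ≠ f3 + a := by omega
  -- distinct x coordinates
  have hxd : ∀ w x y w' x' y', (∀ s ∈ S, s ≠ 0 → ¬ Ap (w + s)) →
      (∀ s ∈ S, s ≠ 0 → ¬ Ap (w' + s)) → Ap w → Ap w' → w ≠ w' →
      w = x * b + y * c → w' = x' * b + y' * c → x ≠ x' := by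
    intro w x y w' x' y' hm hm' hA hA' hne hr hr' heq
    have h1 := hinc w x y w' x' y' hm hA' hne hr hr'
    have h2 := hinc w' x' y' w x y hm' hA hne.symm hr' hr
    omega
  -- the "middle" configuration is impossible
  have key : ∀ wA xA yA wB xB yB wC xC yC,
      Ap wA → Ap wB → Ap wC →
      (∀ s ∈ S, s ≠ 0 → ¬ Ap (wB + s)) → (∀ s ∈ S, s ≠ 0 → ¬ Ap (wC + s)) →
      wC ≠ wB →
      wA = xA * b + yA * c → wB = xB * b + yB * c → wC = xC * b + yC * c →
      (∀ x' y', wB = x' * b + y' * c → xB ≤ x') →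
      xB < xA → xC < xB → False := by
    intro wA xA yA wB xB yB wC xC yC hA hB hC hmB hmC hne hrA hrB hrC hmin h1 h2
    have hxAα : xA < α := hboxb _ _ _ hA hrA
    have hyCB : yB < yC := by
      have := hinc wC xC yC wB xB yB hmC hB hne hrC hrB
      omega
    have hyCγ : yC < γ := hboxc _ _ _ hC hrC
    exact core wB xB yB hB hmB hrB hmin (by omega) (by omega)
  have hx12 : x1 ≠ x2 := hxd _ _ _ _ _ _ hmax1 hmax2 hap1 hap2 hw12 hrep1 hrep2
  have hx13 : x1 ≠ x3 := hxd _ _ _ _ _ _ hmax1 hmax3 hap1 hap3 hw13 hrep1 hrep3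
  have hx23 : x2 ≠ x3 := hxd _ _ _ _ _ _ hmax2 hmax3 hap2 hap3 hw23 hrep2 hrep3
  -- six orderings
  rcases lt_trichotomy x1 x2 with h12 | h12 | h12
  · rcases lt_trichotomy x2 x3 with h23 | h23 | h23
    · -- x1 < x2 < x3 : middle 2, big 3, small 1
      exact key _ _ _ _ _ _ _ _ _ hap3 hap2 hap1 hmax2 hmax1 hw12
        hrep3 hrep2 hrep1 hmin2 h23 h12
    · exact absurd h23 hx23
    · rcases lt_trichotomy x1 x3 with h13 | h13 | h13
      · -- x1 < x3 < x2 : middle 3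
        exact key _ _ _ _ _ _ _ _ _ hap2 hap3 hap1 hmax3 hmax1 hw13
          hrep2 hrep3 hrep1 hmin3 h23 h13
      · exact absurd h13 hx13
      · -- x3 < x1 < x2 : middle 1
        exact key _ _ _ _ _ _ _ _ _ hap2 hap1 hap3 hmax1 hmax3 hw13.symm
          hrep2 hrep1 hrep3 hmin1 h12 h13
  · exact absurd h12 hx12
  · rcases lt_trichotomy x1 x3 with h13 | h13 | h13
    · -- x2 < x1 < x3 : middle 1
      exact key _ _ _ _ _ _ _ _ _ hap3 hap1 hap2 hmax1 hmax2 hw12.symm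
        hrep3 hrep1 hrep2 hmin1 h13 h12
    · exact absurd h13 hx13
    · rcases lt_trichotomy x2 x3 with h23 | h23 | h23
      · -- x2 < x3 < x1 : middle 3
        exact key _ _ _ _ _ _ _ _ _ hap1 hap3 hap2 hmax3 hmax2 hw23
          hrep1 hrep3 hrep2 hmin3 h13 h23
      · exact absurd h23 hx23
      · -- x3 < x2 < x1 : middle 2
        exact key _ _ _ _ _ _ _ _ _ hap1 hap2 hap3 hmax2 hmax3 hw23.symm
          hrep1 hrep2 hrep3 hmin2 h12 h23

end WilfAux

theorem wilf_edim_three (S : Set ℕ) (hS : IsNumSgp S) (hne : S ≠ Set.univ)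
    (he : edim S = 3) : density S ≥ 1 / 3 := by
  obtain ⟨h0, hadd, hfin⟩ := hS
  -- atoms
  have hat3 : (atoms S).ncard = 3 := he
  obtain ⟨a, b, c, hab, hac, hbc, hat⟩ := Set.ncard_eq_three.mp hat3
  set F := frob S with hF
  have hcne : Sᶜ.Nonempty := by
    rw [Set.nonempty_compl]
    exact hne
  have hFgap : F ∉ S := Nat.sSup_mem hcne hfin.bddAbove
  have hub : ∀ x, x ∉ S → x ≤ F := fun x hx => le_csSup hfin.bddAbove hx
  have hgt : ∀ x, F < x → x ∈ S := by
    intro x hx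
    by_contra h
    exact absurd (hub x h) (by omega)
  -- every gap is dominated by a pseudo-Frobenius number
  have hattach : ∀ x, x ∉ S → ∃ s ∈ S, (x + s ∉ S ∧ ∀ u ∈ S, u ≠ 0 → x + s + u ∈ S) := by
    intro x hx
    set T := {s | s ∈ S ∧ x + s ∉ S} with hT
    have hTne : T.Nonempty := ⟨0, h0, by simpa using hx⟩
    have hTbdd : BddAbove T := by
      refine ⟨F, fun s hs => ?_⟩
      have := hub _ hs.2
      omega
    have hmem : sSup T ∈ T := Nat.sSup_mem hTne hTbdd
    refine ⟨sSup T, hmem.1, hmem.2, ?_⟩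
    intro u hu hu0
    by_contra hbad
    have : sSup T + u ∈ T := ⟨hadd _ hmem.1 _ hu, by rw [← Nat.add_assoc]; exact hbad⟩
    have := le_csSup hTbdd this
    omega
  -- at most two pseudo-Frobenius numbers
  classical
  set p2 := if h : ∃ p, (p ∉ S ∧ ∀ s ∈ S, s ≠ 0 → p + s ∈ S) ∧ p ≠ F then h.choose else F
    with hp2def
  have hp2gap : p2 ∉ S := by
    rw [hp2def]
    split
    · next h => exact h.choose_spec.1.1
    · exact hFgap
  have hPFcases : ∀ p, (p ∉ S ∧ ∀ s ∈ S, s ≠ 0 → p + s ∈ S) → p = F ∨ p = p2 := by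
    intro p hp
    by_cases hpF : p = F
    · exact Or.inl hpF
    · right
      have hex : ∃ q, (q ∉ S ∧ ∀ s ∈ S, s ≠ 0 → q + s ∈ S) ∧ q ≠ F := ⟨p, hp, hpF⟩
      rw [hp2def]
      rw [dif_pos hex]
      have hq := hex.choose_spec
      have hPFF : F ∉ S ∧ ∀ s ∈ S, s ≠ 0 → F + s ∈ S :=
        ⟨hFgap, fun s hs hs0 => hgt _ (by omega)⟩
      have := wilf_pf_three h0 hadd hat hp hq.1 hPFF
      rcases this with h | h | h
      · exact h
      · exact absurd h hpF
      · exact absurd h hq.2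
  -- counting
  set n := (S ∩ Set.Iic F).ncard with hn
  have hTfin : (S ∩ Set.Iic F).Finite := (Set.finite_Iic F).inter_of_right S
  have hGcard : ∀ p : ℕ, p ∉ S → {x | x ∉ S ∧ ∃ s ∈ S, x + s = p}.ncard ≤ n := by
    intro p hp
    apply Set.ncard_le_ncard_of_injOn (fun x => p - x)
    · rintro x ⟨hx, s, hs, hxs⟩
      have hs' : p - x = s := by omega
      have hpF : p ≤ F := hub _ hp
      constructor
      · show p - x ∈ S
        rw [hs']; exact hs
      · show p - x ∈ Set.Iic F
        simp only [Set.mem_Iic]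
        omega
    · rintro x ⟨hx, s, hs, hxs⟩ x' ⟨hx', s', hs', hxs'⟩ heq
      simp only at heq
      omega
  have hcover : Sᶜ ⊆ {x | x ∉ S ∧ ∃ s ∈ S, x + s = F} ∪ {x | x ∉ S ∧ ∃ s ∈ S, x + s = p2} := by
    intro x hx
    obtain ⟨s, hs, hgap, hmaxs⟩ := hattach x hx
    have := hPFcases (x + s) ⟨hgap, fun u hu hu0 => hmaxs u hu hu0⟩
    rcases this with h | h
    · exact Or.inl ⟨hx, s, hs, h⟩
    · exact Or.inr ⟨hx, s, hs, h⟩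
  have hGfin : ∀ p : ℕ, {x | x ∉ S ∧ ∃ s ∈ S, x + s = p}.Finite := by
    intro p
    apply hfin.subset
    intro x hx
    exact hx.1
  have hgle : Sᶜ.ncard ≤ 2 * n := by
    calc Sᶜ.ncard ≤ ({x | x ∉ S ∧ ∃ s ∈ S, x + s = F} ∪
        {x | x ∉ S ∧ ∃ s ∈ S, x + s = p2}).ncard :=
          Set.ncard_le_ncard hcover ((hGfin F).union (hGfin p2))
      _ ≤ {x | x ∉ S ∧ ∃ s ∈ S, x + s = F}.ncard +
          {x | x ∉ S ∧ ∃ s ∈ S, x + s = p2}.ncard := Set.ncard_union_le _ _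
      _ ≤ 2 * n := by
          have h1 := hGcard F hFgap
          have h2 := hGcard p2 hp2gap
          omega
  -- n + g = F + 1
  have hsplit : (S ∩ Set.Iic F) ∪ Sᶜ = Set.Iic F := by
    ext x
    simp only [Set.mem_union, Set.mem_inter_iff, Set.mem_Iic, Set.mem_compl_iff]
    constructor
    · rintro (⟨_, h⟩ | h)
      · exact h
      · exact hub x h
    · intro hx
      by_cases hxS : x ∈ S
      · exact Or.inl ⟨hxS, hx⟩
      · exact Or.inr hxS
  have hdisj : Disjoint (S ∩ Set.Iic F) Sᶜ := by
    rw [Set.disjoint_left]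
    rintro x ⟨hx, _⟩ hx'
    exact hx' hx
  have hcount : n + Sᶜ.ncard = F + 1 := by
    have := Set.ncard_union_eq hdisj hTfin hfin
    rw [hsplit] at this
    rw [hn, ← this]
    rw [← Finset.coe_Iic, Set.ncard_coe_finset]
    simp
  -- final arithmetic
  have hg : genus S = Sᶜ.ncard := rfl
  rw [density, hg, ← hF]
  rw [ge_iff_le, le_div_iff₀ (by positivity)]
  have h1 : (n : ℝ) + Sᶜ.ncard = (F : ℝ) + 1 := by exact_mod_cast hcount
  have h2 : (Sᶜ.ncard : ℝ) ≤ 2 * n := by exact_mod_cast hgle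
  linarith
end

section
/- Let F(x,e) = 1/((2x+2)e) - ((2x+1)/((2x+2)(e-2)))^e for real x ≥ 1 and integer e ≥ 8. Then the function x ↦ F(x,8) is strictly decreasing on [1,∞). -/
noncomputable def F (x : ℝ) (e : ℕ) : ℝ :=
  1 / ((2*x+2)*e) - ((2*x+1) / ((2*x+2)*((e:ℝ)-2)))^e

theorem F_strictAnti : StrictAntiOn (fun x : ℝ => F x 8) (Set.Ici 1) := by
  intro x hx y hy hxy
  simp only [Set.mem_Ici] at hx hy
  unfold F
  push_cast
  have hx0 : (0:ℝ) < 2*x+2 := by linarith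
  have hy0 : (0:ℝ) < 2*y+2 := by linarith
  have h1 : 1 / ((2*y+2)*8) < 1 / ((2*x+2)*8) := by
    apply one_div_lt_one_div_of_lt <;> nlinarith
  have hu : (0:ℝ) ≤ (2*x+1) / ((2*x+2)*(8-2)) := by positivity
  have huv : (2*x+1) / ((2*x+2)*(8-2)) < (2*y+1) / ((2*y+2)*(8-2)) := by
    rw [div_lt_div_iff₀ (by linarith) (by linarith)]
    nlinarith
  have h2 := pow_lt_pow_left₀ huv hu (n := 8) (by norm_num)
  linarith
end

section
/- Let F(x,e) = 1/((2x+2)e) - ((2x+1)/((2x+2)(e-2)))^e. The function x ↦ F(x,8) on [1,∞) has a unique zero N, and ⌊N⌋ = 104978. -/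
noncomputable def g (x : ℝ) : ℝ := 6^8 * (2*x+2)^7 - 8 * (2*x+1)^8

lemma F_eq (x : ℝ) (hx : 1 ≤ x) : F x 8 = g x / (8 * 6^8 * (2*x+2)^8) := by
  have h2 : (0:ℝ) < 2*x+2 := by linarith
  unfold F g
  rw [div_pow, div_sub_div _ _ (by positivity) (by positivity),
    div_eq_div_iff (by positivity) (by positivity)]
  push_cast
  ring

lemma F_zero_iff (x : ℝ) (hx : 1 ≤ x) : F x 8 = 0 ↔ g x = 0 := by
  have h2 : (0:ℝ) < 2*x+2 := by linarith
  rw [F_eq x hx, div_eq_zero_iff]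
  constructor
  · rintro (h | h)
    · exact h
    · exact absurd h (by positivity)
  · exact Or.inl

lemma g_inj {a b : ℝ} (ha : 1 ≤ a) (hb : 1 ≤ b) (hga : g a = 0) (hgb : g b = 0) :
    a = b := by
  wlog hab : a ≤ b
  · exact (this hb ha hgb hga (le_of_not_ge hab)).symm
  by_contra hne
  have hab' : a < b := lt_of_le_of_ne hab hne
  set A := 2*a+1 with hA
  set C := 2*b+1 with hC
  have hA3 : (3:ℝ) ≤ A := by rw [hA]; linarith
  have hAC : A < C := by rw [hA, hC]; linarith
  have hA0 : (0:ℝ) < A := by linarith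
  have hC0 : (0:ℝ) < C := by linarith
  have e1 : 6^8 * (A+1)^7 = 8 * A^8 := by
    unfold g at hga; rw [hA]; nlinarith [hga]
  have e2 : 6^8 * (C+1)^7 = 8 * C^8 := by
    unfold g at hgb; rw [hC]; nlinarith [hgb]
  have key : C^8 * (A+1)^7 = A^8 * (C+1)^7 := by
    linear_combination (C^8 / 6^8) * e1 - (A^8 / 6^8) * e2
  have h1 : A*(C+1) ≤ C*(A+1) := by nlinarith
  have h2 : (A*(C+1))^7 ≤ (C*(A+1))^7 :=
    pow_le_pow_left₀ (by positivity) h1 7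
  have h3 : C * (C^7*(A+1)^7) ≤ A * (C^7*(A+1)^7) := by
    calc C * (C^7*(A+1)^7) = C^8*(A+1)^7 := by ring
      _ = A^8*(C+1)^7 := key
      _ = A * (A*(C+1))^7 := by ring
      _ ≤ A * (C*(A+1))^7 := by
          apply mul_le_mul_of_nonneg_left h2 (by linarith)
      _ = A * (C^7*(A+1)^7) := by ring
  have hpos : 0 < C^7*(A+1)^7 := by positivity
  have : C ≤ A := le_of_mul_le_mul_right h3 hpos
  linarith

theorem F_unique_zero :
    ∃ N : ℝ, 1 ≤ N ∧ F N 8 = 0 ∧ (∀ x : ℝ, 1 ≤ x → F x 8 = 0 → x = N) ∧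
      ⌊N⌋ = 104978 := by
  have hcont : ContinuousOn g (Set.Icc (104978:ℝ) 104979) := by
    unfold g; fun_prop
  have hlt : (104978:ℝ) ≤ 104979 := by norm_num
  have hmem : (0:ℝ) ∈ Set.Ioo (g 104979) (g 104978) := by
    constructor
    · unfold g; norm_num
    · unfold g; norm_num
  obtain ⟨N, hN, hgN⟩ := intermediate_value_Ioo' hlt hcont hmem
  have hN1 : (1:ℝ) ≤ N := by linarith [hN.1]
  refine ⟨N, hN1, (F_zero_iff N hN1).2 hgN, ?_, ?_⟩
  · intro x hx hFx
    exact g_inj hx hN1 ((F_zero_iff x hx).1 hFx) hgN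
  · rw [Int.floor_eq_iff]
    push_cast
    refine ⟨le_of_lt hN.1, by linarith [hN.2]⟩
end

section
/- Let F(x,e) = 1/((2x+2)e) - ((2x+1)/((2x+2)(e-2)))^e and let N be the unique zero of x ↦ F(x,8) on [1,∞). Then F(N,e) ≥ 0 for every integer e ≥ 8. -/
/-!
Write `t = 2x + 2` and `r = (2x + 1)/t ∈ [0, 1]`, so that `F x e = 1/(t e) - r^e/(e - 2)^e`.
Since `r ≤ 1`, `r^e ≤ r^8`, and `F x 8 ≥ 0` says `r^8 ≤ 6^8/(8 t)`. Hence `F x e ≥ 0` follows from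
the elementary bound `e · 6^8 ≤ 8 (e - 2)^e` for `e ≥ 8`.
-/

theorem mul_six_pow_eight_le (e : ℕ) (he : 8 ≤ e) : (e : ℝ) * 6 ^ 8 ≤ 8 * ((e : ℝ) - 2) ^ e := by
  have he' : (8 : ℝ) ≤ e := by exact_mod_cast he
  set c : ℝ := (e : ℝ) - 2
  have hc : 6 ≤ c := by linarith
  have h_tail : (e : ℝ) ≤ 8 * c ^ (e - 8) := by
    rcases he.eq_or_lt with rfl | hlt
    · norm_num
    · have : c ≤ c ^ (e - 8) := le_self_pow₀ (by linarith) (by omega)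
      linarith
  calc (e : ℝ) * 6 ^ 8 ≤ 8 * c ^ (e - 8) * c ^ 8 := by
        gcongr
    _ = 8 * c ^ e := by rw [mul_assoc, ← pow_add, Nat.sub_add_cancel he]

theorem F_eq_sub_ratio_pow_div (x : ℝ) (e : ℕ) :
    F x e = 1 / ((2 * x + 2) * e) - ((2 * x + 1) / (2 * x + 2)) ^ e / ((e : ℝ) - 2) ^ e := by
  simp only [F, div_pow, mul_pow, div_div]

theorem F_nonneg_of_F_eight_nonneg {x : ℝ} (hx : 0 ≤ 2 * x + 1) (h8 : 0 ≤ F x 8)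
    {e : ℕ} (he : 8 ≤ e) : 0 ≤ F x e := by
  rw [F_eq_sub_ratio_pow_div] at h8 ⊢
  set t := 2 * x + 2
  set r := (2 * x + 1) / t
  have ht : 0 < t := by linarith
  have hr0 : 0 ≤ r := by positivity
  have hr1 : r ≤ 1 := (div_le_one ht).2 (by linarith)
  have he' : (8 : ℝ) ≤ e := by exact_mod_cast he
  have hr8 : r ^ 8 ≤ 6 ^ 8 / (t * 8) := by
    rw [Nat.cast_ofNat, show (8 : ℝ) - 2 = 6 by norm_num, sub_nonneg,
      div_le_iff₀ (by positivity)] at h8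
    calc r ^ 8 ≤ 1 / (t * 8) * 6 ^ 8 := h8
      _ = 6 ^ 8 / (t * 8) := by ring
  rw [sub_nonneg, div_le_div_iff₀ (pow_pos (by linarith) e) (by positivity)]
  calc r ^ e * (t * e) ≤ r ^ 8 * (t * e) :=
        mul_le_mul_of_nonneg_right (pow_le_pow_of_le_one hr0 hr1 he) (by positivity)
    _ ≤ 6 ^ 8 / (t * 8) * (t * e) := by gcongr
    _ = e * 6 ^ 8 / 8 := by field_simp
    _ ≤ 1 * ((e : ℝ) - 2) ^ e := by linarith [mul_six_pow_eight_le e he]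

theorem F_nonneg_of_zero (N : ℝ) (hN : 1 ≤ N) (hzero : F N 8 = 0) :
    ∀ e : ℕ, 8 ≤ e → F N e ≥ 0 :=
  fun _ he => F_nonneg_of_F_eight_nonneg (by linarith) hzero.ge he
end

section
/- For every real x ≥ 1 and every integer e ≥ 8, 1/((2x+2)e) ≥ ((2x+1)/((2x+2)(e-2)))^e implies 1/((2x+2)(e+1)) ≥ ((2x+1)/((2x+2)(e-1)))^(e+1). -/
theorem F_induction_step (x : ℝ) (hx : 1 ≤ x) (e : ℕ) (he : 8 ≤ e)
    (h : 1 / ((2*x+2)*e) ≥ ((2*x+1) / ((2*x+2)*((e:ℝ)-2)))^e) :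
    1 / ((2*x+2)*(e+1)) ≥ ((2*x+1) / ((2*x+2)*((e:ℝ)-1)))^(e+1) := by
  have hE : (8:ℝ) ≤ (e:ℝ) := by exact_mod_cast he
  have hx2 : (0:ℝ) < 2*x+2 := by linarith
  have hx1 : (0:ℝ) < 2*x+1 := by linarith
  have hE2 : (0:ℝ) < (e:ℝ) - 2 := by linarith
  have hE1 : (0:ℝ) < (e:ℝ) - 1 := by linarith
  set b := (2*x+1) / ((2*x+2)*((e:ℝ)-1)) with hb
  have hbpos : 0 < b := div_pos hx1 (by positivity)
  have h1 : b ≤ (2*x+1) / ((2*x+2)*((e:ℝ)-2)) := by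
    apply div_le_div_of_nonneg_left (le_of_lt hx1) (by positivity)
    nlinarith
  have h2 : b^e ≤ ((2*x+1) / ((2*x+2)*((e:ℝ)-2)))^e :=
    pow_le_pow_left₀ hbpos.le h1 e
  have h3 : b^(e+1) = b^e * b := pow_succ b e
  have h4 : b^(e+1) ≤ 1 / ((2*x+2)*(e:ℝ)) * b := by
    rw [h3]
    have := mul_le_mul_of_nonneg_right (h2.trans h) hbpos.le
    linarith
  have h5 : 1 / ((2*x+2)*(e:ℝ)) * b ≤ 1 / ((2*x+2)*((e:ℝ)+1)) := by
    rw [hb, div_mul_div_comm, one_mul, div_le_div_iff₀ (by positivity) (by positivity)]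
    nlinarith [sq_nonneg ((e:ℝ) - 2), mul_pos hx2 hx2]
  calc b^(e+1) ≤ 1 / ((2*x+2)*(e:ℝ)) * b := h4
    _ ≤ 1 / ((2*x+2)*((e:ℝ)+1)) := h5
end

section
/- Let S be a numerical semigroup with embedding dimension e, multiplicity m(S) (the smallest atom), Frobenius number f(S) and genus g(S). If m(S)/(f(S)+1) > δ for some δ > 0, then f(S)+1 ≤ (2/δ)^e. -/
open Finset

open Classical in
theorem card_filter_mem_closure_le (N : ℕ) (B : Finset ℕ) (hB : ∀ b ∈ B, 0 < b) :
    #{n ∈ range (N + 1) | n ∈ AddSubmonoid.closure (B : Set ℕ)} ≤ ∏ b ∈ B, (N / b + 1) := by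
  induction B using Finset.induction_on with
  | empty =>
    calc #{n ∈ range (N + 1) | n ∈ AddSubmonoid.closure ((∅ : Finset ℕ) : Set ℕ)}
        ≤ #{0} := card_le_card fun n hn => by simp_all
      _ = ∏ b ∈ (∅ : Finset ℕ), (N / b + 1) := by simp
  | @insert a s ha ih =>
    have hsub : {n ∈ range (N + 1) | n ∈ AddSubmonoid.closure ((insert a s : Finset ℕ) : Set ℕ)} ⊆
        (range (N / a + 1) ×ˢ {n ∈ range (N + 1) | n ∈ AddSubmonoid.closure (s : Set ℕ)}).image
          fun p => p.1 * a + p.2 := by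
      intro n hn
      simp only [mem_filter, mem_range, coe_insert, Set.insert_eq, AddSubmonoid.closure_union,
        AddSubmonoid.mem_sup, AddSubmonoid.mem_closure_singleton, smul_eq_mul] at hn
      obtain ⟨hn, _, ⟨k, rfl⟩, r, hr, rfl⟩ := hn
      have hka : k * a ≤ N := by omega
      simp only [mem_image, mem_product, mem_filter, mem_range, Prod.exists]
      exact ⟨k, r, ⟨Nat.lt_succ_of_le ((Nat.le_div_iff_mul_le (hB a (mem_insert_self a s))).2 hka),
        by omega, hr⟩, rfl⟩
    calc _ ≤ _ := card_le_card hsub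
      _ ≤ _ := card_image_le
      _ ≤ (N / a + 1) * ∏ b ∈ s, (N / b + 1) := by
        rw [card_product, card_range]
        exact Nat.mul_le_mul_left _ (ih fun b hb => hB b (mem_insert_of_mem hb))
      _ = _ := by rw [prod_insert ha]

theorem two_pow_le_one_add_div_pow {d m : ℕ} (hdm : d ≤ m) :
    (2 : ℝ) ^ d ≤ (1 + d / m) ^ m := by
  rcases Nat.eq_zero_or_pos m with rfl | hm
  · simp_all
  have hm' : (m : ℝ) ≠ 0 := by positivity
  have hu : (0 : ℝ) ≤ d / m := by positivity
  have hu1 : (d : ℝ) / m ≤ 1 := (div_le_one (by positivity)).2 (by exact_mod_cast hdm)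
  have hbern : (2 : ℝ) ^ ((d : ℝ) / m) ≤ 1 + d / m := by
    simpa [one_add_one_eq_two] using
      rpow_one_add_le_one_add_mul_self (s := 1) (by norm_num) hu hu1
  calc (2 : ℝ) ^ d = ((2 : ℝ) ^ ((d : ℝ) / m)) ^ m := by
        rw [← Real.rpow_natCast _ m, ← Real.rpow_mul (by norm_num), div_mul_cancel₀ _ hm',
          Real.rpow_natCast]
    _ ≤ _ := pow_le_pow_left₀ (by positivity) hbern m

theorem mul_div_add_one_le_two_mul {m c N b : ℕ} (hN : N + 1 = c + m) (hmb : m < b)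
    (hmc : 3 * m ≤ 2 * c) : m * (N / b + 1) ≤ 2 * c := by
  have hq : N / b * b ≤ N := Nat.div_mul_le_self N b
  rcases lt_or_ge c (2 * m) with hc | hc
  · have : N / b < 3 := (Nat.div_lt_iff_lt_mul (by omega)).2 (by omega)
    nlinarith
  · nlinarith

theorem prod_div_add_one_le_two_pow {N : ℕ} {B : Finset ℕ} (hB : ∀ b ∈ B, N < 4 * b) :
    ∏ b ∈ B, (N / b + 1) ≤ 2 ^ (#B + #{b ∈ B | 2 * b ≤ N}) := by
  have hfactor : ∀ b ∈ B, N / b + 1 ≤ 2 * 2 ^ (if 2 * b ≤ N then 1 else 0) := by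
    intro b hb
    have hb4 := hB b hb
    have hb0 : 0 < b := by omega
    split_ifs with h2
    · have : N / b < 4 := (Nat.div_lt_iff_lt_mul hb0).2 (by omega)
      omega
    · have : N / b < 2 := (Nat.div_lt_iff_lt_mul hb0).2 (by omega)
      omega
  calc ∏ b ∈ B, (N / b + 1) ≤ ∏ b ∈ B, 2 * 2 ^ (if 2 * b ≤ N then 1 else 0) :=
        prod_le_prod' hfactor
    _ = 2 ^ (#B + #{b ∈ B | 2 * b ≤ N}) := by
        rw [prod_mul_distrib, prod_const, prod_pow_eq_pow_sum, sum_boole, pow_add]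
        simp

theorem two_mul_card_filter_le {m N : ℕ} {B : Finset ℕ} (hB : ∀ b ∈ B, m < b) :
    2 * #{b ∈ B | 2 * b ≤ N} ≤ N - 2 * m := by
  have hsub : {b ∈ B | 2 * b ≤ N} ⊆ Icc (m + 1) (N / 2) := fun b hb => by
    rw [mem_filter] at hb
    rw [mem_Icc]
    exact ⟨hB b hb.1, by omega⟩
  have := card_le_card hsub
  rw [Nat.card_Icc] at this
  omega

theorem prod_div_add_one_le_pow_of_three_mul_le {m c N : ℕ} {B : Finset ℕ} (hm : 0 < m)
    (hN : N + 1 = c + m) (hBm : ∀ b ∈ B, m < b) (h3 : 3 * m ≤ 2 * c) :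
    ((∏ b ∈ B, (N / b + 1) : ℕ) : ℝ) ≤ (2 * c / m) ^ #B := by
  rw [Nat.cast_prod, ← prod_const]
  refine prod_le_prod (fun _ _ => by positivity) fun b hb => ?_
  rw [le_div_iff₀ (by exact_mod_cast hm)]
  exact_mod_cast (mul_comm m _) ▸ mul_div_add_one_le_two_mul hN (hBm b hb) h3

theorem prod_div_add_one_le_two_mul_pow_of_two_mul_lt {m c N : ℕ} {B : Finset ℕ} (hm : 0 < m)
    (hmc : m ≤ c) (hN : N + 1 = c + m) (hBm : ∀ b ∈ B, m < b) (he : 2 * m ≤ c + (#B + 1))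
    (h3 : 2 * c < 3 * m) :
    ((∏ b ∈ B, (N / b + 1) : ℕ) : ℝ) ≤ 2 * (2 * c / m) ^ #B := by
  set t := #{b ∈ B | 2 * b ≤ N}
  set d := c - m
  have hmR : (0 : ℝ) < m := by exact_mod_cast hm
  have htm : t * m ≤ d * (#B + 1) := by
    have ht : 2 * t ≤ d := (two_mul_card_filter_le hBm).trans (by omega)
    have : m ≤ 2 * (#B + 1) := by omega
    nlinarith
  have hu : (1 : ℝ) + d / m ≤ 2 := by
    have : (d : ℝ) ≤ m := by exact_mod_cast (by omega : d ≤ m)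
    linarith [(div_le_one hmR).2 this]
  have h2t : (2 : ℝ) ^ t ≤ (1 + d / m) ^ (#B + 1) := by
    refine le_of_pow_le_pow_left₀ hm.ne' (by positivity) ?_
    calc ((2 : ℝ) ^ t) ^ m = 2 ^ (t * m) := (pow_mul 2 t m).symm
      _ ≤ 2 ^ (d * (#B + 1)) := pow_le_pow_right₀ one_le_two htm
      _ = ((2 : ℝ) ^ d) ^ (#B + 1) := pow_mul 2 d _
      _ ≤ ((1 + d / m) ^ m) ^ (#B + 1) :=
        pow_le_pow_left₀ (by positivity) (two_pow_le_one_add_div_pow (by omega)) _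
      _ = ((1 + d / m) ^ (#B + 1)) ^ m := by rw [← pow_mul, ← pow_mul, mul_comm]
  have hcm : (2 : ℝ) * c / m = 2 * (1 + d / m) := by
    rw [Nat.cast_sub hmc]
    field_simp
    ring
  have hprod : ∏ b ∈ B, (N / b + 1) ≤ 2 ^ (#B + t) :=
    prod_div_add_one_le_two_pow fun b hb => by have := hBm b hb; omega
  calc ((∏ b ∈ B, (N / b + 1) : ℕ) : ℝ) ≤ 2 ^ #B * 2 ^ t := by
        rw [← pow_add]; exact_mod_cast hprod
    _ ≤ 2 ^ #B * (1 + d / m) ^ (#B + 1) := by gcongr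
    _ = (2 * (1 + d / m)) ^ #B * (1 + d / m) := by rw [mul_pow, pow_succ, mul_assoc]
    _ ≤ (2 * (1 + d / m)) ^ #B * 2 := by gcongr
    _ = 2 * (2 * c / m) ^ #B := by rw [hcm, mul_comm]

theorem le_two_mul_div_pow {m c N : ℕ} {B : Finset ℕ} (hm : 0 < m) (hmc : m ≤ c)
    (hN : N + 1 = c + m) (hBm : ∀ b ∈ B, m < b) (he : 2 * m ≤ c + (#B + 1))
    (hprod : m ≤ ∏ b ∈ B, (N / b + 1)) :
    (c : ℝ) ≤ (2 * c / m) ^ (#B + 1) := by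
  have hmR : (0 : ℝ) < m := by exact_mod_cast hm
  have hx : (0 : ℝ) < 2 * c / m := by
    have : (0 : ℝ) < c := by exact_mod_cast hm.trans_le hmc
    positivity
  have hmx : (m : ℝ) ≤ 2 * (2 * c / m) ^ #B := by
    refine (Nat.cast_le.2 hprod).trans ?_
    rcases le_or_gt (3 * m) (2 * c) with h3 | h3
    · linarith [prod_div_add_one_le_pow_of_three_mul_le hm hN hBm h3, pow_pos hx #B]
    · exact prod_div_add_one_le_two_mul_pow_of_two_mul_lt hm hmc hN hBm he h3
  calc (c : ℝ) = m / 2 * (2 * c / m) := by field_simp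
    _ ≤ (2 * c / m) ^ #B * (2 * c / m) := mul_le_mul_of_nonneg_right (by linarith) hx.le
    _ = (2 * c / m) ^ (#B + 1) := (pow_succ _ #B).symm

section

variable {S : Set ℕ}

theorem mult_le_of_mem {s : ℕ} (hs : s ∈ S) (h0 : s ≠ 0) : mult S ≤ s :=
  Nat.sInf_le ⟨hs, h0⟩

def aperySet (S : Set ℕ) : Set ℕ :=
  {w | w ∈ S ∧ ∀ s ∈ S, s + mult S ≠ w}

theorem mem_atoms_of_lt_two_mul_mult {n : ℕ} (hn : n ∈ S) (h0 : n ≠ 0) (h2 : n < 2 * mult S) :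
    n ∈ atoms S := by
  refine ⟨⟨hn, h0⟩, ?_⟩
  rintro ⟨a, ⟨ha, ha0⟩, b, ⟨hb, hb0⟩, rfl⟩
  have := mult_le_of_mem ha ha0
  have := mult_le_of_mem hb hb0
  omega

namespace IsNumSgp

variable (hS : IsNumSgp S)
include hS

theorem mem_of_frob_lt {n : ℕ} (hn : frob S < n) : n ∈ S := by
  by_contra h
  exact absurd (le_csSup hS.2.2.bddAbove h) (not_le.2 hn)

theorem mult_mem : mult S ∈ S \ {0} :=
  Nat.sInf_mem ⟨frob S + 1, hS.mem_of_frob_lt (lt_add_one _), by simp⟩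

theorem mult_pos : 0 < mult S :=
  Nat.pos_of_ne_zero hS.mult_mem.2

theorem mult_le_frob_add_one : mult S ≤ frob S + 1 := by
  by_contra! h
  have := mult_le_of_mem (hS.mem_of_frob_lt (by omega : frob S < mult S - 1)) (by omega)
  omega

theorem mult_mem_atoms : mult S ∈ atoms S :=
  mem_atoms_of_lt_two_mul_mult hS.mult_mem.1 hS.mult_mem.2 (by have := hS.mult_pos; omega)

theorem atoms_subset_Icc : atoms S ⊆ Set.Icc (mult S) (frob S + mult S) := by
  rintro a ⟨⟨ha, ha0⟩, hsum⟩
  refine ⟨mult_le_of_mem ha ha0, ?_⟩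
  by_contra! h
  exact hsum ⟨mult S, hS.mult_mem, a - mult S,
    ⟨hS.mem_of_frob_lt (by omega), by simp; omega⟩, by omega⟩

theorem atoms_finite : (atoms S).Finite :=
  (Set.finite_Icc _ _).subset hS.atoms_subset_Icc

theorem two_mul_mult_le : 2 * mult S ≤ frob S + 1 + edim S := by
  have hsub : (Finset.Ico (frob S + 1) (2 * mult S) : Set ℕ) ⊆ atoms S := fun n hn => by
    rw [Finset.coe_Ico, Set.mem_Ico] at hn
    exact mem_atoms_of_lt_two_mul_mult (hS.mem_of_frob_lt hn.1) (by omega) hn.2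
  have := Set.ncard_le_ncard hsub hS.atoms_finite
  rw [Set.ncard_coe_finset, Nat.card_Ico] at this
  unfold edim
  omega

/-- Both summands of a decomposition `w = p + q` of an Apéry element are Apéry elements. -/
theorem aperySet_subset_closure : aperySet S ⊆ AddSubmonoid.closure (atoms S \ {mult S}) := by
  rintro w ⟨hw, hwm⟩
  induction w using Nat.strong_induction_on with
  | _ w ih =>
    by_cases h0 : w = 0
    · exact h0 ▸ zero_mem _
    by_cases ha : w ∈ atoms S
    · refine AddSubmonoid.subset_closure ⟨ha, fun h => hwm 0 hS.1 ?_⟩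
      rw [Set.mem_singleton_iff] at h
      omega
    obtain ⟨p, ⟨hp, hp0⟩, q, ⟨hq, hq0⟩, rfl⟩ : ∃ p ∈ S \ {0}, ∃ q ∈ S \ {0}, w = p + q := by
      by_contra hdec
      exact ha ⟨⟨hw, h0⟩, hdec⟩
    rw [Set.mem_singleton_iff] at hp0 hq0
    exact add_mem
      (ih p (by omega) hp fun s hs _ => hwm (s + q) (hS.2.1 _ hs _ hq) (by omega))
      (ih q (by omega) hq fun s hs _ => hwm (p + s) (hS.2.1 _ hp _ hs) (by omega))

theorem le_frob_add_mult_of_mem_aperySet {w : ℕ} (hw : w ∈ aperySet S) :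
    w ≤ frob S + mult S := by
  by_contra! h
  exact hw.2 (w - mult S) (hS.mem_of_frob_lt (by omega)) (by omega)

theorem exists_mem_aperySet_mod_eq (j : ℕ) : ∃ w ∈ aperySet S, w % mult S = j % mult S := by
  classical
  have hex : ∃ w, w ∈ S ∧ w % mult S = j % mult S :=
    ⟨j + mult S * (frob S + 1),
      hS.mem_of_frob_lt (by nlinarith [hS.mult_pos]), Nat.add_mul_mod_self_left _ _ _⟩
  refine ⟨Nat.find hex, ⟨(Nat.find_spec hex).1, fun s hs h => ?_⟩, (Nat.find_spec hex).2⟩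
  have := Nat.find_min' hex ⟨hs, by rw [← (Nat.find_spec hex).2, ← h, Nat.add_mod_right]⟩
  have := hS.mult_pos
  omega

open Classical in
theorem mult_le_card_filter_mem_closure :
    mult S ≤ #{n ∈ range (frob S + mult S + 1) |
      n ∈ AddSubmonoid.closure (atoms S \ {mult S})} := by
  conv_lhs => rw [← card_range (mult S)]
  refine card_le_card_of_surjOn (· % mult S) fun j hj => ?_
  obtain ⟨w, hw, hmod⟩ := hS.exists_mem_aperySet_mod_eq j
  refine ⟨w, ?_, ?_⟩
  · simp only [coe_filter, mem_range, Set.mem_ofPred_eq]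
    exact ⟨Nat.lt_succ_of_le (hS.le_frob_add_mult_of_mem_aperySet hw),
      hS.aperySet_subset_closure hw⟩
  · rw [mem_coe, mem_range] at hj
    simp only [hmod, Nat.mod_eq_of_lt hj]

theorem exists_finset_mult_le_prod : ∃ B : Finset ℕ, #B + 1 = edim S ∧ (∀ b ∈ B, mult S < b) ∧
    mult S ≤ ∏ b ∈ B, ((frob S + mult S) / b + 1) := by
  have hfin : (atoms S \ {mult S}).Finite := hS.atoms_finite.sdiff
  refine ⟨hfin.toFinset, ?_, fun b hb => ?_, ?_⟩
  · rw [← Set.ncard_eq_toFinset_card _ hfin]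
    exact Set.ncard_sdiff_singleton_add_one hS.mult_mem_atoms hS.atoms_finite
  · rw [Set.Finite.mem_toFinset] at hb
    exact lt_of_le_of_ne (hS.atoms_subset_Icc hb.1).1 (Ne.symm hb.2)
  · classical
    refine hS.mult_le_card_filter_mem_closure.trans ?_
    have := card_filter_mem_closure_le (frob S + mult S) hfin.toFinset fun b hb => by
      rw [Set.Finite.mem_toFinset] at hb
      exact hS.mult_pos.trans_le (hS.atoms_subset_Icc hb.1).1
    rwa [Set.Finite.coe_toFinset] at this

end IsNumSgp

end

theorem zhai_lemma4a_general (S : Set ℕ) (hS : IsNumSgp S)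
    (δ : ℝ) (hδ : 0 < δ) (h : (mult S : ℝ) / ((frob S : ℝ) + 1) > δ) :
    (frob S : ℝ) + 1 ≤ (2 / δ)^(edim S) := by
  obtain ⟨B, hcard, hBm, hprod⟩ := hS.exists_finset_mult_le_prod
  have hc : ((frob S + 1 : ℕ) : ℝ) ≤ (2 * (frob S + 1 : ℕ) / mult S) ^ (#B + 1) :=
    le_two_mul_div_pow hS.mult_pos hS.mult_le_frob_add_one (by ring) hBm
      (hcard ▸ hS.two_mul_mult_le) hprod
  have hx : 2 * ((frob S : ℝ) + 1) / mult S ≤ 2 / δ := by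
    have := hS.mult_pos
    rw [gt_iff_lt, lt_div_iff₀ (by positivity)] at h
    rw [div_le_div_iff₀ (by positivity) hδ]
    nlinarith
  push_cast at hc
  rw [hcard] at hc
  exact hc.trans (pow_le_pow_left₀ (by positivity) hx _)

theorem zhai_lemma4a (S : Set ℕ) (hS : IsNumSgp S) (hne : S ≠ Set.univ)
    (δ : ℝ) (hδ : 0 < δ) (h : (mult S : ℝ) / ((frob S : ℝ) + 1) > δ) :
    (frob S : ℝ) + 1 ≤ (2 / δ)^(edim S) :=
  zhai_lemma4a_general S hS δ hδ h
end

section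
/- For fixed integer e ≥ 2 and fixed δ > 0, there are only finitely many numerical semigroups S with embedding dimension e such that m(S)/(f(S)+1) > δ. -/
lemma frob_bound_aux (S : Set ℕ) (hS : IsNumSgp S) (hne : S ≠ Set.univ)
    (e : ℕ) (he2 : 2 ≤ e) (he : edim S = e) (δ : ℝ) (hδ : 0 < δ)
    (hd : (mult S : ℝ) / ((frob S : ℝ) + 1) > δ) :
    frob S + 1 ≤ 2 ^ (⌈2/δ⌉₊ * e) := by
  obtain ⟨h0, hadd, hfin⟩ := hS
  set K := ⌈2/δ⌉₊ with hKdef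
  set f := frob S with hfdef
  have hcne : Sᶜ.Nonempty := Set.nonempty_compl.mpr hne
  have hbdd : BddAbove Sᶜ := hfin.bddAbove
  have hgt : ∀ n, f < n → n ∈ S := by
    intro n hn
    by_contra h
    exact absurd (le_csSup hbdd h) (not_le.mpr hn)
  have hSinf : S.Infinite := by
    have := hfin.infinite_compl
    rwa [compl_compl] at this
  have hS0ne : (S \ {0}).Nonempty := (hSinf.diff (Set.finite_singleton 0)).nonempty
  have hm_mem : mult S ∈ S \ {0} := Nat.sInf_mem hS0ne
  have hm_pos : 0 < mult S := Nat.pos_of_ne_zero (by simpa using hm_mem.2)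
  have hm_le : ∀ x ∈ S \ {0}, mult S ≤ x := fun x hx => Nat.sInf_le hx
  have hatne : (atoms S).Finite := by
    by_contra h
    have h2 : (atoms S).ncard = 0 := Set.Infinite.ncard h
    rw [edim] at he
    omega
  set A : Finset ℕ := hatne.toFinset with hAdef
  have hAcard : A.card = e := by
    rw [← he, edim, Set.ncard_eq_toFinset_card _ hatne]
  have hdecomp : ∀ s, s ∈ S → ∃ m : Multiset ℕ, (∀ y ∈ m, y ∈ atoms S) ∧ m.sum = s := by
    intro s
    induction s using Nat.strong_induction_on with
    | _ s ih =>
      intro hs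
      rcases Nat.eq_zero_or_pos s with rfl | hpos
      · exact ⟨0, by simp⟩
      by_cases ha : s ∈ atoms S
      · exact ⟨{s}, by simp [ha]⟩
      · have hs' : s ∈ S \ {0} := ⟨hs, by simpa using hpos.ne'⟩
        have hsum : s ∈ {n | ∃ a ∈ S \ {0}, ∃ b ∈ S \ {0}, n = a + b} := by
          by_contra h
          exact ha ⟨hs', h⟩
        obtain ⟨a, haS, b, hbS, rfl⟩ := hsum
        have hha : 0 < a := Nat.pos_of_ne_zero (by simpa using haS.2)
        have hhb : 0 < b := Nat.pos_of_ne_zero (by simpa using hbS.2)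
        obtain ⟨ma, hma, hsa⟩ := ih a (by omega) haS.1
        obtain ⟨mb, hmb, hsb⟩ := ih b (by omega) hbS.1
        refine ⟨ma + mb, fun y hy => ?_, by simp [hsa, hsb]⟩
        rcases Multiset.mem_add.mp hy with h | h
        · exact hma y h
        · exact hmb y h
  by_contra hcon
  push_neg at hcon
  have hmap : ∀ n ∈ Finset.Ico (f+1) (2*f+2), ∃ m : Multiset ℕ,
      (∀ y ∈ m, y ∈ atoms S) ∧ m.sum = n := by
    intro n hn
    rw [Finset.mem_Ico] at hn
    exact hdecomp n (hgt n (by omega))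
  choose! rep hrep hsum using hmap
  have hf1 : (0:ℝ) < (f:ℝ) + 1 := by positivity
  have hmδ : δ * ((f:ℝ) + 1) < (mult S : ℝ) := (lt_div_iff₀ hf1).mp hd
  have hmapsto : ∀ n ∈ Finset.Ico (f+1) (2*f+2), rep n ∈ (K • A.val).powerset.toFinset := by
    intro n hn
    have hnIco := Finset.mem_Ico.mp hn
    have hcard : (rep n).card ≤ K := by
      have h1 : (rep n).card • mult S ≤ (rep n).sum :=
        Multiset.card_nsmul_le_sum (fun x hx => hm_le x (hrep n hn x hx).1)
      rw [hsum n hn] at h1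
      have h2 : ((rep n).card : ℝ) * (mult S : ℝ) ≤ (n : ℝ) := by
        rw [smul_eq_mul] at h1
        exact_mod_cast h1
      have h3 : (n : ℝ) < 2 * ((f:ℝ) + 1) := by
        have : n < 2 * f + 2 := hnIco.2
        push_cast
        exact_mod_cast (by push_cast; linarith [show (n:ℝ) < 2*(f:ℝ)+2 from by exact_mod_cast this] : (n:ℝ) < 2 * ((f:ℝ)+1))
      have hmpos : (0:ℝ) < (mult S : ℝ) := by exact_mod_cast hm_pos
      have h4 : ((rep n).card : ℝ) < 2 / δ := by
        have h5 : ((rep n).card : ℝ) * mult S < (2/δ) * mult S := by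
          calc ((rep n).card : ℝ) * mult S ≤ n := h2
            _ < 2 * ((f:ℝ)+1) := h3
            _ < (2/δ) * mult S := by
                rw [div_mul_eq_mul_div, lt_div_iff₀ hδ]
                nlinarith
        exact lt_of_mul_lt_mul_right h5 hmpos.le
      have h6 : ((rep n).card : ℝ) < (K : ℝ) := lt_of_lt_of_le h4 (Nat.le_ceil _)
      exact_mod_cast h6.le
    rw [Multiset.mem_toFinset, Multiset.mem_powerset, Multiset.le_iff_count]
    intro a
    by_cases haA : a ∈ atoms S
    · have hc1 : Multiset.count a A.val = 1 :=
        Multiset.count_eq_one_of_mem A.nodup (by simp [hAdef, haA])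
      rw [Multiset.count_nsmul, hc1, mul_one]
      exact le_trans (Multiset.count_le_card a _) hcard
    · have : a ∉ rep n := fun h => haA (hrep n hn a h)
      simp [Multiset.count_eq_zero.mpr this]
  have hcard1 : (Finset.Ico (f+1) (2*f+2)).card = f + 1 := by
    rw [Nat.card_Ico]
    omega
  have hcard2 : ((K • A.val).powerset.toFinset).card < (Finset.Ico (f+1) (2*f+2)).card := by
    rw [hcard1]
    calc ((K • A.val).powerset.toFinset).card ≤ Multiset.card (K • A.val).powerset :=
          Multiset.toFinset_card_le _
      _ = 2 ^ Multiset.card (K • A.val) := Multiset.card_powerset _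
      _ = 2 ^ (K * e) := by rw [Multiset.card_nsmul, show Multiset.card A.val = e from hAcard]
      _ < f + 1 := hcon
  obtain ⟨x, hx, y, hy, hxy, hfxy⟩ :=
    Finset.exists_ne_map_eq_of_card_lt_of_maps_to hcard2 hmapsto
  apply hxy
  rw [← hsum x hx, ← hsum y hy, hfxy]

theorem zhai_lemma4b (e : ℕ) (he : 2 ≤ e) (δ : ℝ) (hδ : 0 < δ) :
    {S : Set ℕ | IsNumSgp S ∧ S ≠ Set.univ ∧ edim S = e ∧
      (mult S : ℝ) / ((frob S : ℝ) + 1) > δ}.Finite := by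
  set B := 2 ^ (⌈2/δ⌉₊ * e) with hB
  apply Set.Finite.of_finite_image (f := compl)
  · apply Set.Finite.subset (Set.Finite.finite_subsets (Set.finite_Iio B))
    rintro T ⟨S, ⟨hS, hne, he', hd⟩, rfl⟩
    intro x hx
    have hbdd : BddAbove Sᶜ := hS.2.2.bddAbove
    have hxle : x ≤ frob S := le_csSup hbdd hx
    have := frob_bound_aux S hS hne e he he' δ hδ hd
    simp only [Set.mem_Iio]
    omega
  · exact fun a _ b _ h => compl_injective h
end

section
/- Let S be a numerical semigroup with embedding dimension e ≥ 4 satisfying Zhai's inequality d(S) ≥ 1/e − (m(S)−1)(e−2)/((f(S)+1)·2e), and suppose additionally that if f(S)+1 ≤ 3·m(S) then d(S) ≥ 1/e. Then d(S) > (8−e)/(6e) whenever 4 ≤ e ≤ 7. -/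
theorem prop_a (S : Set ℕ) (hS : IsNumSgp S) (hne : S ≠ Set.univ)
    (he4 : 4 ≤ edim S) (he7 : edim S ≤ 7)
    (hzhai : density S ≥ 1 / (edim S : ℝ) -
      ((mult S : ℝ) - 1) * ((edim S : ℝ) - 2) / (((frob S : ℝ) + 1) * (2 * edim S)))
    (heliahou : (frob S : ℝ) + 1 ≤ 3 * mult S → density S ≥ 1 / (edim S : ℝ)) :
    density S > (8 - (edim S : ℝ)) / (6 * edim S) := by
  set e : ℝ := (edim S : ℝ) with hedef
  set m : ℝ := (mult S : ℝ)
  set F : ℝ := (frob S : ℝ) + 1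
  have he : (4:ℝ) ≤ e := by rw [hedef]; exact_mod_cast he4
  have hF : (1:ℝ) ≤ F := by
    have : (0:ℝ) ≤ (frob S : ℝ) := Nat.cast_nonneg _
    simp only [F]; linarith
  have hm : (0:ℝ) ≤ m := Nat.cast_nonneg _
  have hsplit : (8 - e) / (6 * e) = 1 / e - (e - 2) / (6 * e) := by
    field_simp
    ring
  by_cases h : F ≤ 3 * m
  · have hd := heliahou h
    have h2 : (8 - e) / (6 * e) < 1 / e := by
      rw [hsplit]
      have : 0 < (e - 2) / (6 * e) := div_pos (by linarith) (by linarith)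
      linarith
    linarith
  · push_neg at h
    have h1 : (m - 1) * (e - 2) / (F * (2 * e)) < (e - 2) / (6 * e) := by
      rw [div_lt_div_iff₀ (by positivity) (by positivity : (0:ℝ) < 6 * e)]
      nlinarith [mul_lt_mul_of_pos_left (show 3 * m - 3 < F by linarith)
        (show (0:ℝ) < 2 * e * (e - 2) by nlinarith)]
    rw [hsplit]
    linarith
end

section
/- Let e ≥ 8 be an integer, N real with N ≥ 104978 and F(N,e) ≥ 0, and let δ = (2N+1)/((N+1)(e−2)). Let S be a numerical semigroup with embedding dimension e satisfying Zhai's inequality d(S) ≥ 1/e − (m(S)−1)(e−2)/((f(S)+1)·2e). If m(S)/(f(S)+1) ≤ δ, then d(S) > 1/((2N+2)e) ≥ ((2N+1)/((2N+2)(e−2)))^e. -/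
/-! Writing `ρ = m (e - 2) / (f + 1)`, Zhai's lower bound equals
`1/e - ρ/(2e) + (e - 2)/((f + 1) 2e)`. The hypothesis `m/(f + 1) ≤ δ` says `ρ ≤ (2N + 1)/(N + 1)`,
and `1/e - (2N + 1)/((N + 1) 2e) = 1/((2N + 2) e)`; the positive term `(e - 2)/((f + 1) 2e)`
makes the inequality strict. -/

lemma mul_sub_two_div_le_of_div_le {e f m N : ℝ} (he : 2 < e)
    (hm : m / (f + 1) ≤ (2*N+1) / ((N+1) * (e - 2))) :
    m * (e - 2) / (f + 1) ≤ (2*N+1) / (N+1) := by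
  have he2 : 0 < e - 2 := by linarith
  calc m * (e - 2) / (f + 1) = m / (f + 1) * (e - 2) := by ring
    _ ≤ (2*N+1) / ((N+1) * (e - 2)) * (e - 2) := by gcongr
    _ = (2*N+1) / (N+1) := by field_simp

lemma one_div_lt_zhai_bound {e f m N : ℝ} (he : 2 < e) (hf : 0 < f + 1) (hN : 0 < N + 1)
    (hm : m / (f + 1) ≤ (2*N+1) / ((N+1) * (e - 2))) :
    1 / ((2*N+2) * e) < 1 / e - (m - 1) * (e - 2) / ((f + 1) * (2 * e)) := by
  have he0 : 0 < e := by linarith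
  have he2 : 0 < e - 2 := by linarith
  have hρ := mul_sub_two_div_le_of_div_le he hm
  calc 1 / ((2*N+2) * e) = 1 / e - (2*N+1) / (N+1) / (2 * e) := by field_simp; ring
    _ ≤ 1 / e - m * (e - 2) / (f + 1) / (2 * e) := by gcongr
    _ < 1 / e - m * (e - 2) / (f + 1) / (2 * e) + (e - 2) / ((f + 1) * (2 * e)) := by
      simp only [lt_add_iff_pos_right]
      positivity
    _ = 1 / e - (m - 1) * (e - 2) / ((f + 1) * (2 * e)) := by field_simp; ring

theorem prop2_a_general (S : Set ℕ)
    (he : 8 ≤ edim S) (N : ℝ) (hN : 104978 ≤ N) (hF : F N (edim S) ≥ 0)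
    (δ : ℝ) (hδ : δ = (2*N+1) / ((N+1) * ((edim S : ℝ) - 2)))
    (hzhai : density S ≥ 1 / (edim S : ℝ) -
      ((mult S : ℝ) - 1) * ((edim S : ℝ) - 2) / (((frob S : ℝ) + 1) * (2 * edim S)))
    (hm : (mult S : ℝ) / ((frob S : ℝ) + 1) ≤ δ) :
    density S > 1 / ((2*N+2) * edim S) ∧
      1 / ((2*N+2) * edim S) ≥ ((2*N+1) / ((2*N+2) * ((edim S : ℝ) - 2)))^(edim S) := by
  have he2 : (2 : ℝ) < edim S := by exact_mod_cast (by omega : 2 < edim S)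
  have hf : (0 : ℝ) < frob S + 1 := by positivity
  have hN1 : 0 < N + 1 := by linarith
  exact ⟨lt_of_lt_of_le (one_div_lt_zhai_bound he2 hf hN1 (hδ ▸ hm)) hzhai, sub_nonneg.mp hF⟩

theorem prop2_a (S : Set ℕ) (hS : IsNumSgp S) (hne : S ≠ Set.univ)
    (he : 8 ≤ edim S) (N : ℝ) (hN : 104978 ≤ N) (hF : F N (edim S) ≥ 0)
    (δ : ℝ) (hδ : δ = (2*N+1) / ((N+1) * ((edim S : ℝ) - 2)))
    (hzhai : density S ≥ 1 / (edim S : ℝ) -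
      ((mult S : ℝ) - 1) * ((edim S : ℝ) - 2) / (((frob S : ℝ) + 1) * (2 * edim S)))
    (hm : (mult S : ℝ) / ((frob S : ℝ) + 1) ≤ δ) :
    density S > 1 / ((2*N+2) * edim S) ∧
      1 / ((2*N+2) * edim S) ≥ ((2*N+1) / ((2*N+2) * ((edim S : ℝ) - 2)))^(edim S) :=
  prop2_a_general S he N hN hF δ hδ hzhai hm
end

section
/- Let e ≥ 8 and let N ≥ 1 be a real number with F(N,e) ≥ 0, where F(x,e) = 1/((2x+2)e) − ((2x+1)/((2x+2)(e−2)))^e, and set δ = (2N+1)/((N+1)(e−2)). If S is a numerical semigroup with embedding dimension e, m(S)/(f(S)+1) > δ, and f(S)+1−g(S) > 1, then d(S) > ((2N+1)/((2N+2)(e−2)))^e. -/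
/-- Every nonzero element of an additively closed set is a sum of atoms. -/
lemma gen_atoms (S : Set ℕ) :
    ∀ x, x ∈ S → x ≠ 0 → ∃ M : Multiset ℕ, (∀ a ∈ M, a ∈ atoms S) ∧ M.sum = x := by
  intro x
  induction x using Nat.strong_induction_on with
  | _ x ih =>
    intro hxS hx0
    by_cases hx : x ∈ atoms S
    · exact ⟨{x}, by simpa using hx, by simp⟩
    · have hsum : x ∈ {n | ∃ a ∈ S \ {0}, ∃ b ∈ S \ {0}, n = a + b} := by
        by_contra h
        exact hx ⟨⟨hxS, by simpa using hx0⟩, h⟩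
      obtain ⟨a, ⟨haS, ha0⟩, b, ⟨hbS, hb0⟩, rfl⟩ := hsum
      have ha0' : a ≠ 0 := by simpa using ha0
      have hb0' : b ≠ 0 := by simpa using hb0
      obtain ⟨Ma, hMa, hsa⟩ := ih a (by omega) haS ha0'
      obtain ⟨Mb, hMb, hsb⟩ := ih b (by omega) hbS hb0'
      refine ⟨Ma + Mb, ?_, by simp [hsa, hsb]⟩
      intro c hc
      rcases Multiset.mem_add.1 hc with h | h
      · exact hMa c h
      · exact hMb c h

lemma choose_le_two_pow' (n k : ℕ) : n.choose k ≤ 2 ^ n := by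
  rcases le_or_gt k n with h | h
  · calc n.choose k ≤ ∑ i ∈ Finset.range (n + 1), n.choose i :=
          Finset.single_le_sum (fun i _ => Nat.zero_le _) (Finset.mem_range.2 (by omega))
      _ = 2 ^ n := Nat.sum_range_choose n
  · rw [Nat.choose_eq_zero_of_lt h]; exact Nat.zero_le _

set_option maxHeartbeats 2000000 in
theorem prop2_b (e : ℕ) (he : 8 ≤ e) (N : ℝ) (hN : 1 ≤ N) (hF : F N e ≥ 0)
    (δ : ℝ) (hδ : δ = (2*N+1) / ((N+1) * ((e : ℝ) - 2)))
    (S : Set ℕ) (hS : IsNumSgp S) (hne : S ≠ Set.univ) (heS : edim S = e)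
    (hm : (mult S : ℝ) / ((frob S : ℝ) + 1) > δ)
    (hg : 1 < frob S + 1 - genus S) :
    density S > ((2*N+1) / ((2*N+2) * ((e : ℝ) - 2)))^e := by
  obtain ⟨h0S, hadd, hfin⟩ := hS
  set f := frob S with hf
  set g := genus S with hgdef
  set m := mult S with hmdef
  have he8 : (8 : ℝ) ≤ (e : ℝ) := by exact_mod_cast he
  -- basic facts
  have hScne : Sᶜ.Nonempty := by
    rw [Set.nonempty_compl]; exact hne
  have hbig : ∀ x, f < x → x ∈ S := by
    intro x hx
    by_contra h
    exact absurd (le_csSup hfin.bddAbove h) (not_le.2 hx)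
  have hS0ne : (S \ {0}).Nonempty := ⟨f + 1, hbig _ (Nat.lt_succ_self f), by simp⟩
  have hmmem : m ∈ S \ {0} := Nat.sInf_mem hS0ne
  have hmpos : 0 < m := Nat.pos_of_ne_zero (by simpa using hmmem.2)
  -- atoms form a finite set of size e
  have hA : (atoms S).Finite := by
    by_contra h
    have h2 : (atoms S).ncard = 0 := Set.Infinite.ncard h
    rw [edim] at heS
    omega
  set A : Finset ℕ := hA.toFinset with hAdef
  have hAcard : A.card = e := by
    rw [← heS, edim, Set.ncard_eq_toFinset_card (atoms S) hA]
  have h0A : (0 : ℕ) ∉ A := by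
    simp only [hAdef, Set.Finite.mem_toFinset]
    intro h
    exact h.1.2 rfl
  set A' : Finset ℕ := insert 0 A with hA'def
  have hA'card : A'.card = e + 1 := by
    rw [hA'def, Finset.card_insert_of_notMem h0A, hAcard]
  -- positivity facts
  have hfp : (0 : ℝ) < (f : ℝ) + 1 := by positivity
  have he2 : (0 : ℝ) < (e : ℝ) - 2 := by linarith
  have hδpos : 0 < δ := by
    rw [hδ]; apply div_pos <;> nlinarith
  have hmδ : δ * ((f : ℝ) + 1) < (m : ℝ) := by
    rw [gt_iff_lt, lt_div_iff₀ hfp] at hm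
    exact hm
  have hδlb : 3 / (2 * ((e : ℝ) - 2)) ≤ δ := by
    rw [hδ, div_le_div_iff₀ (by nlinarith) (by nlinarith)]
    nlinarith
  -- bound on the number of atoms in a decomposition
  set t0 : ℕ := (4 * e - 9) / 3 with ht0
  have hkbound : ∀ k : ℕ, (k : ℝ) * m ≤ 2 * f + 1 → k ≤ t0 := by
    intro k hk
    have hk3 : (3 * k : ℕ) < 4 * (e - 2) := by
      have hkr : (k : ℝ) * δ < 2 := by
        rcases Nat.eq_zero_or_pos k with rfl | hkpos
        · simpa using (by norm_num : (0:ℝ) < 2)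
        · have h1 : (k : ℝ) * (δ * ((f : ℝ) + 1)) < (k : ℝ) * m := by
            have : (1 : ℝ) ≤ (k : ℝ) := by exact_mod_cast hkpos
            nlinarith
          have h2 : (k : ℝ) * m < 2 * ((f : ℝ) + 1) := by
            calc (k : ℝ) * m ≤ 2 * f + 1 := hk
              _ < 2 * ((f : ℝ) + 1) := by linarith
          have h3 : (k : ℝ) * (δ * ((f : ℝ) + 1)) < 2 * ((f : ℝ) + 1) := h1.trans h2
          nlinarith
      have : (k : ℝ) * (3 / (2 * ((e : ℝ) - 2))) < 2 := by
        calc (k : ℝ) * (3 / (2 * ((e : ℝ) - 2))) ≤ (k : ℝ) * δ := by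
              apply mul_le_mul_of_nonneg_left hδlb (Nat.cast_nonneg k)
          _ < 2 := hkr
      have h9 : (3 * k : ℝ) < 4 * ((e : ℝ) - 2) := by
        rw [show (k : ℝ) * (3 / (2 * ((e : ℝ) - 2))) = (3 * k) / (2 * ((e : ℝ) - 2)) by ring,
          div_lt_iff₀ (by positivity)] at this
        linarith
      have : ((3 * k : ℕ) : ℝ) < ((4 * (e - 2) : ℕ) : ℝ) := by
        push_cast [Nat.cast_sub (by omega : 2 ≤ e)]
        push_cast at h9
        nlinarith
      exact_mod_cast this
    rw [ht0, Nat.le_div_iff_mul_le (by norm_num)]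
    omega
  -- the counting argument: Icc (f+1) (2f+1) injects into Sym ↥A' t0
  classical
  have hsubset : Finset.Icc (f + 1) (2 * f + 1) ⊆
      Finset.image (fun z : Sym {x // x ∈ A'} t0 => (z.1.map Subtype.val).sum) Finset.univ := by
    intro x hx
    rw [Finset.mem_Icc] at hx
    have hxS : x ∈ S := hbig x (by omega)
    have hx0 : x ≠ 0 := by omega
    obtain ⟨M, hMatoms, hMsum⟩ := gen_atoms S x hxS hx0
    have hMlow : ∀ a ∈ M, m ≤ a := fun a ha => Nat.sInf_le (hMatoms a ha).1
    have hcard : M.card ≤ t0 := by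
      apply hkbound
      have h1 : M.card * m ≤ M.sum := by
        simpa [smul_eq_mul] using Multiset.card_nsmul_le_sum hMlow
      have : M.card * m ≤ 2 * f + 1 := by rw [hMsum] at h1; omega
      exact_mod_cast this
    set M' : Multiset ℕ := M + Multiset.replicate (t0 - M.card) 0 with hM'def
    have hmem : ∀ a ∈ M', a ∈ A' := by
      intro a ha
      rcases Multiset.mem_add.1 ha with h | h
      · exact Finset.mem_insert_of_mem ((Set.Finite.mem_toFinset hA).2 (hMatoms a h))
      · rw [Multiset.eq_of_mem_replicate h]
        exact Finset.mem_insert_self 0 A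
    have hM'card : M'.card = t0 := by
      rw [hM'def, Multiset.card_add, Multiset.card_replicate]
      omega
    rw [Finset.mem_image]
    refine ⟨⟨M'.pmap (fun a h => (⟨a, h⟩ : {x // x ∈ A'})) hmem, by
      rw [Multiset.card_pmap]; exact hM'card⟩, Finset.mem_univ _, ?_⟩
    show (Multiset.map Subtype.val (M'.pmap (fun a h => (⟨a, h⟩ : {x // x ∈ A'})) hmem)).sum = x
    rw [Multiset.map_pmap]
    simp only
    rw [Multiset.pmap_eq_map]
    rw [Multiset.map_id']
    rw [hM'def, Multiset.sum_add, hMsum, Multiset.sum_replicate]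
    simp
  have hcount : f + 1 ≤ (e + t0).choose t0 := by
    have h1 : (Finset.Icc (f + 1) (2 * f + 1)).card = f + 1 := by
      rw [Nat.card_Icc]; omega
    have h2 : (Finset.Icc (f + 1) (2 * f + 1)).card ≤
        (Finset.image (fun z : Sym {x // x ∈ A'} t0 => (z.1.map Subtype.val).sum)
          Finset.univ).card := Finset.card_le_card hsubset
    have h3 : (Finset.image (fun z : Sym {x // x ∈ A'} t0 => (z.1.map Subtype.val).sum)
        Finset.univ).card ≤ Fintype.card (Sym {x // x ∈ A'} t0) := by
      calc _ ≤ (Finset.univ : Finset (Sym {x // x ∈ A'} t0)).card := Finset.card_image_le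
        _ = _ := Finset.card_univ
    have h4 : Fintype.card (Sym {x // x ∈ A'} t0) = (e + t0).choose t0 := by
      rw [Sym.card_sym_eq_choose, Fintype.card_coe, hA'card]
      congr 1
      omega
    omega
  clear hsubset
  -- numeric bound: (e + t0).choose t0 ≤ 2^(e+t0) ≤ 2 * (e-2)^e
  have hpow : 2 ^ (e + t0) ≤ 2 * (e - 2) ^ e := by
    rw [← Nat.pow_le_pow_iff_left (n := 3) (by norm_num)]
    have ht03 : 3 * t0 ≤ 4 * e - 9 := by
      rw [ht0]
      have := Nat.div_mul_le_self (4 * e - 9) 3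
      omega
    calc (2 ^ (e + t0)) ^ 3 = 2 ^ (3 * (e + t0)) := by rw [← pow_mul, mul_comm]
      _ ≤ 2 ^ (7 * e) := Nat.pow_le_pow_right (by norm_num) (by omega)
      _ = 128 ^ e := by rw [Nat.pow_mul]
      _ ≤ 8 * 216 ^ e := by
          have : (128 : ℕ) ^ e ≤ 216 ^ e := Nat.pow_le_pow_left (by norm_num) e
          omega
      _ = 8 * (6 ^ e) ^ 3 := by rw [← Nat.pow_mul, mul_comm e 3, Nat.pow_mul]
      _ ≤ 8 * ((e - 2) ^ e) ^ 3 := by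
          have h6 : (6 : ℕ) ≤ e - 2 := by omega
          have := Nat.pow_le_pow_left h6 e
          exact Nat.mul_le_mul_left 8 (Nat.pow_le_pow_left this 3)
      _ = (2 * (e - 2) ^ e) ^ 3 := by ring
  have hf1 : f + 1 ≤ 2 * (e - 2) ^ e :=
    hcount.trans ((choose_le_two_pow' (e + t0) t0).trans hpow)
  -- final real chain
  have hgf : g + 2 ≤ f + 1 := by omega
  have hgr : (2 : ℝ) ≤ (f : ℝ) + 1 - (g : ℝ) := by
    have : ((g : ℕ) : ℝ) + 2 ≤ ((f : ℕ) : ℝ) + 1 := by exact_mod_cast hgf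
    linarith
  have hepow : (0 : ℝ) < ((e : ℝ) - 2) ^ e := pow_pos he2 e
  have hstep2 : (1 / ((e : ℝ) - 2)) ^ e ≤ 2 / ((f : ℝ) + 1) := by
    rw [div_pow, one_pow, div_le_div_iff₀ hepow hfp]
    have hc : ((f : ℝ) + 1) ≤ 2 * ((e : ℝ) - 2) ^ e := by
      have : ((f + 1 : ℕ) : ℝ) ≤ ((2 * (e - 2) ^ e : ℕ) : ℝ) := by exact_mod_cast hf1
      push_cast [Nat.cast_sub (by omega : 2 ≤ e)] at this
      linarith
    linarith
  have hdens : density S = ((f : ℝ) + 1 - (g : ℝ)) / ((f : ℝ) + 1) := rfl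
  clear_value f g m
  have hstep3 : 2 / ((f : ℝ) + 1) ≤ density S := by
    rw [hdens, div_le_div_iff₀ hfp hfp]
    exact mul_le_mul_of_nonneg_right hgr (le_of_lt hfp)
  have hd1 : (0 : ℝ) < (2 * N + 2) * ((e : ℝ) - 2) := mul_pos (by linarith) he2
  have hd0 : (0 : ℝ) ≤ (2 * N + 1) / ((2 * N + 2) * ((e : ℝ) - 2)) :=
    div_nonneg (by linarith) (le_of_lt hd1)
  have hstep1 : ((2*N+1) / ((2*N+2) * ((e : ℝ) - 2)))^e < (1 / ((e : ℝ) - 2)) ^ e := by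
    apply pow_lt_pow_left₀ _ hd0 (by omega)
    rw [div_lt_div_iff₀ hd1 he2]
    nlinarith [he2, hN]
  exact lt_of_lt_of_le hstep1 (hstep2.trans hstep3)
end

section
/- Let S be a numerical semigroup with multiplicity m, Frobenius number f and genus g, and suppose f+1 ≤ 2m. Then Wilf's inequality holds: (f+1−g)/(f+1) ≥ 1/e(S). -/
lemma set_Icc_ncard (a b : ℕ) : (Set.Icc a b).ncard = b + 1 - a := by
  rw [← Finset.coe_Icc, Set.ncard_coe_finset, Nat.card_Icc]

theorem wilf_of_half (S : Set ℕ) (hS : IsNumSgp S) (hne : S ≠ Set.univ)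
    (h : frob S + 1 ≤ 2 * mult S) :
    density S ≥ 1 / (edim S : ℝ) := by
  obtain ⟨h0, hadd, hfin⟩ := hS
  set f := frob S with hf
  set m := mult S with hm
  have hcne : Sᶜ.Nonempty := by rwa [Set.nonempty_compl]
  have hbdd : BddAbove Sᶜ := hfin.bddAbove
  have hfS : f ∉ S := Nat.sSup_mem hcne hbdd
  have hgt : ∀ x, f < x → x ∈ S := by
    intro x hx
    by_contra hxS
    exact absurd (le_csSup hbdd hxS) (not_le.mpr hx)
  have hSd : (S \ {0}).Nonempty := ⟨f + 1, hgt _ (Nat.lt_succ_self f), by simp⟩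
  have hmS : m ∈ S ∧ m ≠ 0 := Nat.sInf_mem hSd
  have hmle : ∀ x ∈ S, x ≠ 0 → m ≤ x := fun x hx hx0 => Nat.sInf_le ⟨hx, hx0⟩
  have hm0 : 0 < m := Nat.pos_of_ne_zero hmS.2
  -- small positive elements of S are atoms
  have hatom : ∀ x ∈ S, x ≠ 0 → x < 2 * m → x ∈ atoms S := by
    intro x hx hx0 hx2
    refine ⟨⟨hx, hx0⟩, ?_⟩
    rintro ⟨a, ha, b, hb, rfl⟩
    have := hmle a ha.1 ha.2
    have := hmle b hb.1 hb.2
    omega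
  -- atoms are bounded
  have hab : atoms S ⊆ Set.Icc 1 (f + m) := by
    rintro x ⟨⟨hx, hx0⟩, hns⟩
    simp only [Set.mem_Icc]
    constructor
    · exact Nat.one_le_iff_ne_zero.mpr hx0
    · by_contra hgt'
      push_neg at hgt'
      refine hns ⟨m, ⟨hmS.1, ?_⟩, x - m, ⟨hgt _ (by omega), ?_⟩, by omega⟩
      · simpa using hmS.2
      · simp only [Set.mem_singleton_iff]; omega
  have hafin : (atoms S).Finite := (Set.finite_Icc 1 (f + m)).subset hab
  -- the left part A
  set A : Set ℕ := S ∩ Set.Icc m f with hA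
  have hAfin : A.Finite := (Set.finite_Icc m f).subset Set.inter_subset_right
  set k := A.ncard with hk
  have hAatom : A ⊆ atoms S := by
    rintro x ⟨hx, hx1, hx2⟩
    exact hatom x hx (by omega) (by omega)
  -- the interval I above f
  set I : Set ℕ := Set.Icc (f + 1) (f + m) with hI
  have hIcard : I.ncard = m := by rw [hI, set_Icc_ncard]; omega
  set N : Set ℕ := I \ atoms S with hN
  set B : Set ℕ := I ∩ atoms S with hB
  have hIfin : I.Finite := Set.finite_Icc _ _
  have hNfin : N.Finite := hIfin.subset Set.diff_subset
  have hBfin : B.Finite := hIfin.subset Set.inter_subset_left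
  have hNB : N.ncard + B.ncard = m := by
    rw [← hIcard, ← Set.ncard_union_eq (by
      rw [Set.disjoint_iff]; rintro x ⟨⟨_, hx2⟩, _, hx4⟩; exact hx2 hx4) hNfin hBfin]
    congr 1
    ext x
    by_cases hx : x ∈ atoms S <;> simp [hN, hB, hx]
  -- pairs
  set P : Set (ℕ × ℕ) := {p : ℕ × ℕ | p.1 ∈ A ∧ p.2 ∈ A ∧ p.1 ≤ p.2} with hP
  have hPsub : P ⊆ A ×ˢ A := fun p hp => ⟨hp.1, hp.2.1⟩
  have hPfin : P.Finite := (hAfin.prod hAfin).subset hPsub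
  -- N is covered by sums of pairs
  have hNsub : N ⊆ (fun p : ℕ × ℕ => p.1 + p.2) '' P := by
    rintro x ⟨hxI, hxna⟩
    simp only [hI, Set.mem_Icc] at hxI
    have hxS : x ∈ S := hgt _ (by omega)
    have hx0 : x ≠ 0 := by omega
    have : x ∈ {n | ∃ a ∈ S \ {0}, ∃ b ∈ S \ {0}, n = a + b} := by
      by_contra hc
      exact hxna ⟨⟨hxS, hx0⟩, hc⟩
    obtain ⟨a, ⟨haS, ha0⟩, b, ⟨hbS, hb0⟩, hab'⟩ := this
    have hma := hmle a haS (by simpa using ha0)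
    have hmb := hmle b hbS (by simpa using hb0)
    rcases le_total a b with hle | hle
    · exact ⟨(a, b), ⟨⟨haS, hma, by omega⟩, ⟨hbS, hmb, by omega⟩, hle⟩, hab'.symm⟩
    · exact ⟨(b, a), ⟨⟨hbS, hmb, by omega⟩, ⟨haS, hma, by omega⟩, hle⟩, by show b + a = x; omega⟩
  have hNle : N.ncard ≤ P.ncard :=
    le_trans (Set.ncard_le_ncard hNsub (hPfin.image _)) (Set.ncard_image_le hPfin)
  -- 2 * |P| ≤ k*k + k
  have hAA : (A ×ˢ A).ncard = k * k := by
    rw [← hAfin.coe_toFinset, ← Finset.coe_product, Set.ncard_coe_finset,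
      Finset.card_product, ← Set.ncard_coe_finset, hAfin.coe_toFinset]
  have hP2 : 2 * P.ncard ≤ k * k + k := by
    have hswap : (Prod.swap '' P).ncard = P.ncard :=
      Set.ncard_image_of_injective _ Prod.swap_injective
    have hu : P ∪ Prod.swap '' P ⊆ A ×ˢ A := by
      rintro p (hp | ⟨q, hq, rfl⟩)
      · exact hPsub hp
      · exact ⟨hq.2.1, hq.1⟩
    have hi : P ∩ Prod.swap '' P ⊆ (fun a => (a, a)) '' A := by
      rintro p ⟨hp1, q, hq, rfl⟩
      have : q.2 = q.1 := le_antisymm hp1.2.2 hq.2.2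
      exact ⟨q.2, hq.2.1, by simp [Prod.ext_iff, this]⟩
    have key := Set.ncard_union_add_ncard_inter P (Prod.swap '' P) hPfin (hPfin.image _)
    have h1 : (P ∪ Prod.swap '' P).ncard ≤ k * k := by
      rw [← hAA]; exact Set.ncard_le_ncard hu (hAfin.prod hAfin)
    have h2 : (P ∩ Prod.swap '' P).ncard ≤ k := by
      refine le_trans (Set.ncard_le_ncard hi (hAfin.image _)) ?_
      exact le_trans (Set.ncard_image_le hAfin) le_rfl
    omega
  -- e ≥ k + |B|
  have hdisj : Disjoint A B := by
    rw [Set.disjoint_iff]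
    rintro x ⟨⟨_, _, hx2⟩, ⟨hx3, _⟩, _⟩
    exact absurd hx3 (by omega)
  have he : k + B.ncard ≤ edim S := by
    rw [← Set.ncard_union_eq hdisj hAfin hBfin]
    exact Set.ncard_le_ncard (Set.union_subset hAatom Set.inter_subset_right) hafin
  -- counting: n + g = f + 1
  have hcompl : Sᶜ ⊆ Set.Icc 0 f := fun x hx => ⟨Nat.zero_le x, le_csSup hbdd hx⟩
  set n := (S ∩ Set.Icc 0 f).ncard with hn
  have hng : n + genus S = f + 1 := by
    have hun : S ∩ Set.Icc 0 f ∪ Sᶜ = Set.Icc 0 f := by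
      ext x
      constructor
      · rintro (⟨-, hx⟩ | hx)
        · exact hx
        · exact hcompl hx
      · intro hx
        by_cases hxS : x ∈ S
        · exact Or.inl ⟨hxS, hx⟩
        · exact Or.inr hxS
    have hd : Disjoint (S ∩ Set.Icc 0 f) Sᶜ := by
      rw [Set.disjoint_iff]; rintro x ⟨⟨hx1, -⟩, hx2⟩; exact hx2 hx1
    have hcount := Set.ncard_union_eq hd
      ((Set.finite_Icc 0 f).subset Set.inter_subset_right) hfin
    rw [hun, set_Icc_ncard] at hcount
    unfold genus
    omega
  -- n = 1 + k
  have hnk : n = 1 + k := by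
    have hun : S ∩ Set.Icc 0 f = {0} ∪ A := by
      ext x
      simp only [Set.mem_inter_iff, Set.mem_Icc, Set.mem_union, Set.mem_singleton_iff, hA]
      constructor
      · rintro ⟨hxS, -, hxf⟩
        by_cases hx0 : x = 0
        · exact Or.inl hx0
        · exact Or.inr ⟨hxS, hmle x hxS hx0, hxf⟩
      · rintro (rfl | ⟨hxS, hxm, hxf⟩)
        · exact ⟨h0, le_rfl, Nat.zero_le f⟩
        · exact ⟨hxS, Nat.zero_le x, hxf⟩
    have hd : Disjoint ({0} : Set ℕ) A := by
      rw [Set.disjoint_iff]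
      rintro x ⟨hx0, hxS, hxm, -⟩
      simp only [Set.mem_singleton_iff] at hx0
      subst hx0
      exact absurd hxm (by omega)
    rw [hn, hun, Set.ncard_union_eq hd (Set.finite_singleton 0) hAfin, Set.ncard_singleton]
  have hepos : 0 < edim S := by
    rw [edim, Set.ncard_pos hafin]
    exact ⟨m, hatom m hmS.1 hmS.2 (by omega)⟩
  -- the key natural-number inequality
  have hkey : f + 1 ≤ n * edim S := by
    rcases le_or_gt m f with hmf | hmf
    · have hk1 : 1 ≤ k := by
        rw [hk]
        exact (Set.ncard_pos hAfin).mpr ⟨m, hmS.1, le_rfl, hmf⟩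
      have hmul : (1 + k) * (k + B.ncard) ≤ (1 + k) * edim S :=
        Nat.mul_le_mul_left _ he
      have hbb : 1 * B.ncard ≤ k * B.ncard := Nat.mul_le_mul_right _ hk1
      rw [hnk]
      nlinarith [hmul, hbb, hNB, hP2, hNle, h]
    · have hk0 : k = 0 := by
        rw [hk, hA, Set.Icc_eq_empty (by omega), Set.inter_empty, Set.ncard_empty]
      have hP0 : P.ncard = 0 := by
        rw [hk0] at hP2
        omega
      rw [hnk, hk0]
      have : f + 1 ≤ m := by omega
      omega
  -- conclude over the reals
  have hnum : (f : ℝ) + 1 - (genus S : ℝ) = (n : ℝ) := by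
    have : (n : ℝ) + (genus S : ℝ) = (f : ℝ) + 1 := by exact_mod_cast hng
    linarith
  rw [ge_iff_le, density, ← hf, hnum, div_le_div_iff₀ (by positivity)
    (by positivity), one_mul]
  calc (f : ℝ) + 1 = ((f + 1 : ℕ) : ℝ) := by push_cast; ring
    _ ≤ ((n * edim S : ℕ) : ℝ) := by exact_mod_cast hkey
    _ = (n : ℝ) * (edim S : ℝ) := by push_cast; ring
end
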